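/- arXiv:2112.02398 — 6 statements merged into one kernel-verified Lean document; each statement's English description precedes it below -/
import Mathlib

section
/- If m is a metric on I of unit length linearly expanded by f with factor λ (i.e. f*m = λm), and h: I → I is defined by h(x) = m([0,x]), then h ∘ f = g ∘ h on each monotonicity interval of f, where g is the piecewise linear map with constant slope λ and turning points h(c_i). In particular, for x, y in the same monotonicity interval I_k: |h(f(y)) − h(f(x))| = λ·|h(y) − h(x)|. -/
/-!
Since `h y - h x = m [x, y]`, the first claim says that `m (f J) = lam * m J` for every arc
`J` inside a lap `I_k`; as `f` maps such an arc monotonically onto an arc, this is what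
expansion gives once the other laps are seen to contribute nothing. They meet `J` in at most
one point, and such sets have `m`-length zero: points by additivity, `∅` because expanding the
degenerate arc `{0}` makes the nonnegative term `m ∅` vanish. Then `g = h ∘ f ∘ h⁻¹` is well
defined by injectivity of `h` and works, because `h` maps each `I_k` onto
`[h (c k), h (c (k+1))]`.
-/

open Set

/-- A piecewise monotone map of degree `d` on `I = [0,1]`:
a continuous map with `f(∂I) ⊆ ∂I` and turning points `c 0 = 0 < c 1 < ... < c d = 1`
such that `f` is strictly monotone on each `[c k, c (k+1)]`, with alternating monotonicity. -/
structure PwMono (d : ℕ) : Type where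
  f : ℝ → ℝ
  c : ℕ → ℝ
  pos : 0 < d
  cont : ContinuousOn f (Set.Icc 0 1)
  maps : Set.MapsTo f (Set.Icc 0 1) (Set.Icc 0 1)
  bdry0 : f 0 = 0 ∨ f 0 = 1
  bdry1 : f 1 = 0 ∨ f 1 = 1
  c0 : c 0 = 0
  cd : c d = 1
  cmono : StrictMonoOn c (Set.Iic d)
  piece : ∀ k < d, StrictMonoOn f (Set.Icc (c k) (c (k+1))) ∨
    StrictAntiOn f (Set.Icc (c k) (c (k+1)))
  alt : ∀ k, k + 1 < d →
    (StrictMonoOn f (Set.Icc (c k) (c (k+1))) ↔ ¬ StrictMonoOn f (Set.Icc (c (k+1)) (c (k+2))))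

/-- The pullback operator on metrics: `(f*m)(J) = ∑ₖ m (f (J ∩ Iₖ))`. -/
noncomputable def pullback (f : ℝ → ℝ) (d : ℕ) (c : ℕ → ℝ) (m : Set ℝ → ℝ) : Set ℝ → ℝ :=
  fun J => ∑ k ∈ Finset.range d, m (f '' (J ∩ Set.Icc (c k) (c (k+1))))

/-- The metric induced by Lebesgue measure. -/
noncomputable def leb : Set ℝ → ℝ := fun S => (MeasureTheory.volume S).toReal

/-- A metric on `I`: a nonnegative functional on arcs, additive on adjacent arcs. -/
def IsArcMetric (m : Set ℝ → ℝ) : Prop :=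
  (∀ x y : ℝ, 0 ≤ m (Set.Icc x y)) ∧
  (∀ x y z : ℝ, x ≤ y → y ≤ z → m (Set.Icc x z) = m (Set.Icc x y) + m (Set.Icc y z))

namespace IsArcMetric

variable {m : Set ℝ → ℝ}

theorem singleton_eq_zero (hm : IsArcMetric m) (z : ℝ) : m {z} = 0 := by
  have := hm.2 z z z le_rfl le_rfl
  rw [Icc_self] at this
  linarith

theorem nonneg_of_subsingleton (hm : IsArcMetric m) {S : Set ℝ} (hS : S.Subsingleton) :
    0 ≤ m S := by
  rcases hS.eq_empty_or_singleton with rfl | ⟨z, rfl⟩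
  · simpa using hm.1 1 0
  · exact (hm.singleton_eq_zero z).ge

theorem eq_zero_of_subsingleton (hm : IsArcMetric m) (hempty : m ∅ = 0) {S : Set ℝ}
    (hS : S.Subsingleton) : m S = 0 := by
  rcases hS.eq_empty_or_singleton with rfl | ⟨z, rfl⟩
  · exact hempty
  · exact hm.singleton_eq_zero z

theorem sub_eq (hm : IsArcMetric m) {x y : ℝ} (hx : 0 ≤ x) (hxy : x ≤ y) :
    m (Icc 0 y) - m (Icc 0 x) = m (Icc x y) := by
  rw [hm.2 0 x y hx hxy]
  ring

end IsArcMetric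

namespace PwMono

variable {d : ℕ} (F : PwMono d)

def lap (k : ℕ) : Set ℝ := Icc (F.c k) (F.c (k + 1))

theorem c_le_c {i j : ℕ} (hij : i ≤ j) (hj : j ≤ d) : F.c i ≤ F.c j :=
  F.cmono.monotoneOn (mem_Iic.mpr (hij.trans hj)) (mem_Iic.mpr hj) hij

theorem lap_subset_unitInterval {k : ℕ} (hk : k < d) : F.lap k ⊆ Icc 0 1 := by
  rw [← F.c0, ← F.cd]
  exact Icc_subset_Icc (F.c_le_c (Nat.zero_le k) hk.le) (F.c_le_c hk le_rfl)

theorem lap_inter_lap_subsingleton {j k : ℕ} (hj : j < d) (hk : k < d) (hjk : j ≠ k) :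
    (F.lap j ∩ F.lap k).Subsingleton := by
  wlog hlt : j < k generalizing j k
  · rw [inter_comm]
    exact this hk hj hjk.symm (by omega)
  have hck : F.c (j + 1) ≤ F.c k := F.c_le_c hlt hk.le
  exact (subsingleton_Icc_of_ge hck).anti fun x ⟨⟨_, hxj⟩, hxk, _⟩ => ⟨hxk, hxj⟩

variable {m : Set ℝ → ℝ} {lam : ℝ}

theorem empty_eq_zero_of_pullback (hm : IsArcMetric m) (hd : 1 < d)
    (hexp : pullback F.f d F.c m (Icc 0 0) = lam * m (Icc 0 0)) : m ∅ = 0 := by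
  have hc1 : 0 < F.c 1 := F.c0 ▸ F.cmono (mem_Iic.mpr (Nat.zero_le d)) (mem_Iic.mpr hd.le) one_pos
  have hterm : m (F.f '' (Icc 0 0 ∩ F.lap 1)) = m ∅ := by
    rw [Icc_self, singleton_inter_eq_empty.mpr fun h0 => hc1.not_ge h0.1, image_empty]
  have hnonneg : ∀ j ∈ Finset.range d, 0 ≤ m (F.f '' (Icc 0 0 ∩ F.lap j)) := fun j _ =>
    hm.nonneg_of_subsingleton (((subsingleton_Icc_of_ge le_rfl).anti inter_subset_left).image _)
  have hsum : pullback F.f d F.c m (Icc 0 0) = 0 := by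
    rw [hexp, Icc_self, hm.singleton_eq_zero, mul_zero]
  rw [← hterm]
  exact (Finset.sum_eq_zero_iff_of_nonneg hnonneg).mp hsum 1 (Finset.mem_range.mpr hd)

theorem image_eq_mul_of_pullback (hm : IsArcMetric m)
    (hexp : ∀ x y : ℝ, 0 ≤ x → x ≤ y → y ≤ 1 →
      pullback F.f d F.c m (Icc x y) = lam * m (Icc x y))
    {k : ℕ} (hk : k < d) {x y : ℝ} (hxy : x ≤ y) (hx : x ∈ F.lap k) (hy : y ∈ F.lap k) :
    m (F.f '' Icc x y) = lam * m (Icc x y) := by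
  have hsub : Icc x y ⊆ Icc (F.c k) (F.c (k + 1)) := Icc_subset_Icc hx.1 hy.2
  rw [← hexp x y (F.lap_subset_unitInterval hk hx).1 hxy (F.lap_subset_unitInterval hk hy).2,
    pullback, Finset.sum_eq_single_of_mem k (Finset.mem_range.mpr hk),
    inter_eq_self_of_subset_left hsub]
  intro j hj hjk
  have hj := Finset.mem_range.mp hj
  have hempty := F.empty_eq_zero_of_pullback hm (by omega) (hexp 0 0 le_rfl le_rfl zero_le_one)
  refine hm.eq_zero_of_subsingleton hempty (Subsingleton.image ?_ _)
  exact (F.lap_inter_lap_subsingleton hk hj (Ne.symm hjk)).anti (inter_subset_inter_left _ hsub)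

theorem abs_sub_eq_mul_of_pullback (hm : IsArcMetric m)
    (hexp : ∀ x y : ℝ, 0 ≤ x → x ≤ y → y ≤ 1 →
      pullback F.f d F.c m (Icc x y) = lam * m (Icc x y))
    {k : ℕ} (hk : k < d) {x y : ℝ} (hx : x ∈ F.lap k) (hy : y ∈ F.lap k) :
    |m (Icc 0 (F.f y)) - m (Icc 0 (F.f x))| = lam * |m (Icc 0 y) - m (Icc 0 x)| := by
  wlog hxy : x ≤ y generalizing x y
  · rw [abs_sub_comm, abs_sub_comm (m (Icc 0 y))]
    exact this hy hx (le_of_not_ge hxy)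
  have hI := F.lap_subset_unitInterval hk
  have hcont : ContinuousOn F.f (Icc x y) := F.cont.mono ((Icc_subset_Icc hx.1 hy.2).trans hI)
  have hfx := F.maps (hI hx)
  have hfy := F.maps (hI hy)
  have hexpand := F.image_eq_mul_of_pullback hm hexp hk hxy hx hy
  rw [hm.sub_eq (hI hx).1 hxy, abs_of_nonneg (hm.1 x y)]
  rcases F.piece k hk with hmono | hanti
  · have hmono := hmono.monotoneOn.mono (Icc_subset_Icc hx.1 hy.2)
    have hfxy := hmono (left_mem_Icc.mpr hxy) (right_mem_Icc.mpr hxy) hxy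
    rw [hcont.image_Icc_of_monotoneOn hxy hmono] at hexpand
    rw [hm.sub_eq hfx.1 hfxy, abs_of_nonneg (hm.1 _ _), hexpand]
  · have hanti := hanti.antitoneOn.mono (Icc_subset_Icc hx.1 hy.2)
    have hfxy := hanti (left_mem_Icc.mpr hxy) (right_mem_Icc.mpr hxy) hxy
    rw [hcont.image_Icc_of_antitoneOn hxy hanti] at hexpand
    rw [abs_sub_comm, hm.sub_eq hfy.1 hfxy, abs_of_nonneg (hm.1 _ _), hexpand]

end PwMono

theorem stmt_4_general (d : ℕ) (F : PwMono d) (m : Set ℝ → ℝ) (hm : IsArcMetric m)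
    (lam : ℝ)
    (hexp : ∀ x y : ℝ, 0 ≤ x → x ≤ y → y ≤ 1 →
      pullback F.f d F.c m (Set.Icc x y) = lam * m (Set.Icc x y))
    (h : ℝ → ℝ) (hdef : ∀ x, h x = m (Set.Icc 0 x))
    -- m non-atomic with full support, so h is a homeomorphism of I
    (hcont : ContinuousOn h (Set.Icc 0 1)) (hmono : StrictMonoOn h (Set.Icc 0 1)) :
    (∀ k < d, ∀ x ∈ Set.Icc (F.c k) (F.c (k + 1)), ∀ y ∈ Set.Icc (F.c k) (F.c (k + 1)),
      |h (F.f y) - h (F.f x)| = lam * |h y - h x|) ∧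
    ∃ g : ℝ → ℝ,
      (∀ k < d, ∀ x ∈ Set.Icc (h (F.c k)) (h (F.c (k + 1))),
        ∀ y ∈ Set.Icc (h (F.c k)) (h (F.c (k + 1))), |g x - g y| = lam * |x - y|) ∧
      ∀ x ∈ Set.Icc (0 : ℝ) 1, h (F.f x) = g (h x) := by
  have hlaps : ∀ k < d, ∀ x ∈ F.lap k, ∀ y ∈ F.lap k,
      |h (F.f y) - h (F.f x)| = lam * |h y - h x| := fun k hk x hx y hy => by
    simpa only [hdef] using F.abs_sub_eq_mul_of_pullback hm hexp hk hx hy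
  have hleft := hmono.injOn.leftInvOn_invFunOn
  refine ⟨hlaps, fun t => h (F.f (Function.invFunOn h (Icc 0 1) t)), ?_,
    fun x hx => by simp only [hleft hx]⟩
  intro k hk s hs t ht
  have hI := F.lap_subset_unitInterval hk
  have himage := (hcont.mono hI).image_Icc_of_monotoneOn (F.c_le_c k.le_succ hk)
    (hmono.monotoneOn.mono hI)
  rw [← himage] at hs ht
  obtain ⟨x, hx, rfl⟩ := hs
  obtain ⟨y, hy, rfl⟩ := ht
  simp only [hleft (hI hx), hleft (hI hy)]
  exact hlaps k hk y hy x hx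

/-- a unit-length metric `m` linearly expanded by `f` with factor `λ`
defines, via `h(x) = m([0,x])`, a semiconjugacy of `f` to the piecewise linear map `g`
of constant slope `λ` with turning points `h (c i)`. -/
theorem stmt_4 (d : ℕ) (F : PwMono d) (m : Set ℝ → ℝ) (hm : IsArcMetric m)
    (hunit : m (Set.Icc (0 : ℝ) 1) = 1) (lam : ℝ) (hlam : 0 < lam)
    (hexp : ∀ x y : ℝ, 0 ≤ x → x ≤ y → y ≤ 1 →
      pullback F.f d F.c m (Set.Icc x y) = lam * m (Set.Icc x y))
    (h : ℝ → ℝ) (hdef : ∀ x, h x = m (Set.Icc 0 x))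
    -- m non-atomic with full support, so h is a homeomorphism of I
    (hcont : ContinuousOn h (Set.Icc 0 1)) (hmono : StrictMonoOn h (Set.Icc 0 1)) :
    (∀ k < d, ∀ x ∈ Set.Icc (F.c k) (F.c (k + 1)), ∀ y ∈ Set.Icc (F.c k) (F.c (k + 1)),
      |h (F.f y) - h (F.f x)| = lam * |h y - h x|) ∧
    ∃ g : ℝ → ℝ,
      (∀ k < d, ∀ x ∈ Set.Icc (h (F.c k)) (h (F.c (k + 1))),
        ∀ y ∈ Set.Icc (h (F.c k)) (h (F.c (k + 1))), |g x - g y| = lam * |x - y|) ∧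
      ∀ x ∈ Set.Icc (0 : ℝ) 1, h (F.f x) = g (h x) :=
  stmt_4_general d F m hm lam hexp h hdef hcont hmono
end

section
/- Let f be piecewise monotone, and for each n let f_n = Θ^n(f) with associated constant-slope maps g_n of slope s_n and homeomorphisms h_n satisfying f_n = g_n ∘ h_n and f_{n+1} = h_n ∘ g_n. Set H_n = h_{n-1} ∘ ... ∘ h_0. Then for all n ≥ 1: (f*)^n(m_0) = s_0 s_1 ⋯ s_{n-1} · H_n*(m_0), where m_0 is the Lebesgue metric. -/
open Set

/-! The semiconjugacies `Hₙ ∘ f = fₙ ∘ Hₙ` force `Hₙ` to carry the turning points of `f` to those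
of `fₙ`, since turning points are determined by the map (they are its interior strict local
extrema). Hence `Hₙ₊₁ = hₙ ∘ Hₙ` carries each lap `Iₖ` of `f` into the lap of `gₙ` on which
`gₙ` stretches lengths by `sₙ`. Inducting on `n`: `f` maps `J ∩ Iₖ` onto an interval, and
`Hₙ ∘ f = gₙ ∘ Hₙ₊₁` there, so the `k`-th term of `(f*)ⁿ⁺¹ m₀ (J)` is
`s₀ ⋯ sₙ · |Hₙ₊₁(J ∩ Iₖ)|`; these lengths add up to `|Hₙ₊₁ J|`. -/

theorem leb_Icc_inter_Icc (u v : ℝ) {a b : ℝ} (hab : a ≤ b) :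
    leb (Icc u v ∩ Icc a b) = max u (min v b) - max u (min v a) := by
  rw [leb, Icc_inter_Icc, Real.volume_Icc, ENNReal.toReal_ofReal']
  simp only [max_def, min_def]
  split_ifs <;> linarith

theorem leb_Icc {a b : ℝ} (hab : a ≤ b) : leb (Icc a b) = b - a := by
  rw [leb, Real.volume_Icc, ENNReal.toReal_ofReal (sub_nonneg.2 hab)]

theorem leb_uIcc (a b : ℝ) : leb (uIcc a b) = |b - a| := by
  rw [leb, Real.volume_interval, ENNReal.toReal_ofReal (abs_nonneg _)]

/-- The pieces `[u, v] ∩ [p k, p (k+1)]` have lengths `π (p (k+1)) - π (p k)`, where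
`π t = max u (min v t)` is the projection onto `[u, v]`, so the sum telescopes. -/
theorem sum_leb_Icc_inter_Icc {d : ℕ} {p : ℕ → ℝ} {u v : ℝ} (hp : ∀ k < d, p k ≤ p (k + 1))
    (h0 : p 0 ≤ u) (huv : u ≤ v) (hd : v ≤ p d) :
    ∑ k ∈ Finset.range d, leb (Icc u v ∩ Icc (p k) (p (k + 1))) = v - u := by
  rw [Finset.sum_congr rfl fun k hk => leb_Icc_inter_Icc u v (hp k (Finset.mem_range.1 hk)),
    Finset.sum_range_sub (fun k => max u (min v (p k))), min_eq_left hd, max_eq_right huv,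
    min_eq_right (h0.trans huv), max_eq_left h0]

theorem iterate_pullback_leb_empty (f : ℝ → ℝ) (d : ℕ) (c : ℕ → ℝ) (n : ℕ) :
    (fun m => pullback f d c m)^[n] leb ∅ = 0 :=
  Function.Iterate.rec (fun m : Set ℝ → ℝ => m ∅ = 0) (by simp [leb])
    (fun m hm => by simp [pullback, hm]) n

section Images

variable {α δ : Type*} [ConditionallyCompleteLinearOrder α] [TopologicalSpace α]
  [OrderTopology α] [DenselyOrdered α] [LinearOrder δ] [TopologicalSpace δ]
  [OrderClosedTopology δ] {f : α → δ} {a b : α}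

theorem ContinuousOn.image_Icc_eq_uIcc (hab : a ≤ b) (hf : ContinuousOn f (Icc a b))
    (hmono : MonotoneOn f (Icc a b) ∨ AntitoneOn f (Icc a b)) :
    f '' Icc a b = uIcc (f a) (f b) := by
  have ha : a ∈ Icc a b := left_mem_Icc.2 hab
  have hb : b ∈ Icc a b := right_mem_Icc.2 hab
  rcases hmono with hm | ha'
  · rw [hf.image_Icc_of_monotoneOn hab hm, uIcc_of_le (hm ha hb hab)]
  · rw [hf.image_Icc_of_antitoneOn hab ha', uIcc_of_ge (ha' ha hb hab)]

end Images

theorem leb_image_Icc_of_abs_sub_eq_mul {g : ℝ → ℝ} {s α β : ℝ} (hs : 0 < s) (hαβ : α ≤ β)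
    (hg : ∀ x ∈ Icc α β, ∀ y ∈ Icc α β, |g x - g y| = s * |x - y|) :
    leb (g '' Icc α β) = s * (β - α) := by
  have hc : ContinuousOn g (Icc α β) :=
    (LipschitzOnWith.of_dist_le_mul (K := s.toNNReal) fun x hx y hy => by
      rw [Real.dist_eq, Real.dist_eq, hg x hx y hy, Real.coe_toNNReal _ hs.le]).continuousOn
  have hi : InjOn g (Icc α β) := fun x hx y hy hxy => by
    have := hg x hx y hy
    rw [hxy, sub_self, abs_zero, eq_comm, mul_eq_zero, abs_eq_zero, sub_eq_zero] at this
    exact this.resolve_left hs.ne'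
  rw [hc.image_Icc_eq_uIcc hαβ ((hc.strictMonoOn_of_injOn_Icc' hαβ hi).imp
    StrictMonoOn.monotoneOn StrictAntiOn.antitoneOn), leb_uIcc,
    hg β (right_mem_Icc.2 hαβ) α (left_mem_Icc.2 hαβ), abs_of_nonneg (sub_nonneg.2 hαβ)]

theorem strictMonoOn_image_of_comp {α β γ : Type*} [LinearOrder α] [Preorder β] [Preorder γ]
    {φ : α → β} {f : β → γ} {S : Set α} (hφ : StrictMonoOn φ S) (hf : StrictMonoOn (f ∘ φ) S) :
    StrictMonoOn f (φ '' S) := by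
  rintro _ ⟨a, ha, rfl⟩ _ ⟨b, hb, rfl⟩ hab
  exact hf ha hb ((hφ.lt_iff_lt ha hb).1 hab)

theorem strictAntiOn_image_of_comp {α β γ : Type*} [LinearOrder α] [Preorder β] [Preorder γ]
    {φ : α → β} {f : β → γ} {S : Set α} (hφ : StrictMonoOn φ S) (hf : StrictAntiOn (f ∘ φ) S) :
    StrictAntiOn f (φ '' S) := by
  rintro _ ⟨a, ha, rfl⟩ _ ⟨b, hb, rfl⟩ hab
  exact hf ha hb ((hφ.lt_iff_lt ha hb).1 hab)

theorem exists_le_lt_succ_of_le_of_lt {u : ℕ → ℝ} {t : ℝ} {n : ℕ} (h0 : u 0 ≤ t)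
    (hn : t < u n) :
    ∃ k < n, u k ≤ t ∧ t < u (k + 1) := by
  induction n with
  | zero => exact absurd h0 hn.not_ge
  | succ n ih =>
    by_cases htn : t < u n
    · obtain ⟨k, hk, hkt⟩ := ih htn
      exact ⟨k, hk.trans n.lt_succ_self, hkt⟩
    · exact ⟨n, n.lt_succ_self, not_lt.1 htn, hn⟩

structure IsIncHomeo (φ : ℝ → ℝ) : Prop where
  continuousOn : ContinuousOn φ (Icc 0 1)
  strictMonoOn : StrictMonoOn φ (Icc 0 1)
  map_zero : φ 0 = 0
  map_one : φ 1 = 1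

namespace IsIncHomeo

variable {φ ψ : ℝ → ℝ}

theorem id : IsIncHomeo id := ⟨continuousOn_id, strictMonoOn_id, rfl, rfl⟩

theorem mapsTo (hφ : IsIncHomeo φ) : MapsTo φ (Icc 0 1) (Icc 0 1) := fun _ hx =>
  ⟨hφ.map_zero ▸ hφ.strictMonoOn.monotoneOn (left_mem_Icc.2 zero_le_one) hx hx.1,
    hφ.map_one ▸ hφ.strictMonoOn.monotoneOn hx (right_mem_Icc.2 zero_le_one) hx.2⟩

theorem comp (hψ : IsIncHomeo ψ) (hφ : IsIncHomeo φ) : IsIncHomeo (ψ ∘ φ) :=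
  ⟨hψ.continuousOn.comp hφ.continuousOn hφ.mapsTo,
    hψ.strictMonoOn.comp hφ.strictMonoOn hφ.mapsTo,
    by simp [hφ.map_zero, hψ.map_zero], by simp [hφ.map_one, hψ.map_one]⟩

theorem image_Icc (hφ : IsIncHomeo φ) {x y : ℝ} (hx : 0 ≤ x) (hxy : x ≤ y) (hy : y ≤ 1) :
    φ '' Icc x y = Icc (φ x) (φ y) :=
  (hφ.continuousOn.mono (Icc_subset_Icc hx hy)).image_Icc_of_monotoneOn hxy
    (hφ.strictMonoOn.monotoneOn.mono (Icc_subset_Icc hx hy))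

theorem leb_image_Icc (hφ : IsIncHomeo φ) {x y : ℝ} (hx : 0 ≤ x) (hxy : x ≤ y) (hy : y ≤ 1) :
    leb (φ '' Icc x y) = φ y - φ x := by
  rw [hφ.image_Icc hx hxy hy,
    leb_Icc (hφ.strictMonoOn.monotoneOn ⟨hx, hxy.trans hy⟩ ⟨hx.trans hxy, hy⟩ hxy)]

end IsIncHomeo

namespace PwMono

variable {d : ℕ} (F : PwMono d)

theorem c_mem_Icc {i : ℕ} (hi : i ≤ d) : F.c i ∈ Icc (0 : ℝ) 1 :=
  ⟨F.c0 ▸ F.cmono.monotoneOn (Nat.zero_le d) hi i.zero_le,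
    F.cd ▸ F.cmono.monotoneOn hi (mem_Iic.2 le_rfl) hi⟩

theorem c_lt_c {i j : ℕ} (hij : i < j) (hj : j ≤ d) : F.c i < F.c j :=
  F.cmono (hij.le.trans hj) hj hij

theorem Icc_c_subset {k : ℕ} (hk : k < d) : Icc (F.c k) (F.c (k + 1)) ⊆ Icc 0 1 :=
  Icc_subset_Icc (F.c_mem_Icc hk.le).1 (F.c_mem_Icc hk).2

theorem image_Icc_c {φ : ℝ → ℝ} (hφ : IsIncHomeo φ) {k : ℕ} (hk : k < d) :
    φ '' Icc (F.c k) (F.c (k + 1)) = Icc (φ (F.c k)) (φ (F.c (k + 1))) :=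
  hφ.image_Icc (F.c_mem_Icc hk.le).1 (F.c_lt_c k.lt_succ_self hk).le (F.c_mem_Icc hk).2

/-- By `alt`, an interior turning point is a strict local extremum. -/
theorem not_strictMonoOn_or_strictAntiOn {i : ℕ} (hi : i + 1 < d) {a b : ℝ}
    (ha : a < F.c (i + 1)) (hb : F.c (i + 1) < b) :
    ¬ (StrictMonoOn F.f (Icc a b) ∨ StrictAntiOn F.f (Icc a b)) := by
  set t := F.c (i + 1)
  have hit : F.c i < t := F.c_lt_c i.lt_succ_self hi.le
  have hti : t < F.c (i + 2) := F.c_lt_c (i + 1).lt_succ_self hi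
  set w₁ := max a (F.c i)
  set w₂ := min b (F.c (i + 2))
  have hw₁ : w₁ < t := max_lt ha hit
  have hw₂ : t < w₂ := lt_min hb hti
  have hw₁l : w₁ ∈ Icc (F.c i) t := ⟨le_max_right _ _, hw₁.le⟩
  have htl : t ∈ Icc (F.c i) t := right_mem_Icc.2 hit.le
  have hw₂r : w₂ ∈ Icc t (F.c (i + 2)) := ⟨hw₂.le, min_le_right _ _⟩
  have htr : t ∈ Icc t (F.c (i + 2)) := left_mem_Icc.2 hti.le
  have hextr : (F.f w₁ < F.f t ∧ F.f w₂ < F.f t) ∨ (F.f t < F.f w₁ ∧ F.f t < F.f w₂) := by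
    rcases F.piece i (by omega), F.piece (i + 1) hi with ⟨hmono | hanti, hmono' | hanti'⟩
    · exact absurd hmono' ((F.alt i hi).1 hmono)
    · exact .inl ⟨hmono hw₁l htl hw₁, hanti' htr hw₂r hw₂⟩
    · exact .inr ⟨hanti hw₁l htl hw₁, hmono' htr hw₂r hw₂⟩
    · refine absurd ((F.alt i hi).2 fun hmono' => ?_) fun hmono => ?_
      · exact (hmono' htr hw₂r hw₂).not_gt (hanti' htr hw₂r hw₂)
      · exact (hmono hw₁l htl hw₁).not_gt (hanti hw₁l htl hw₁)
  have hw₁ab : w₁ ∈ Icc a b := ⟨le_max_left _ _, (hw₁.trans hb).le⟩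
  have htab : t ∈ Icc a b := ⟨ha.le, hb.le⟩
  have hw₂ab : w₂ ∈ Icc a b := ⟨(ha.trans hw₂).le, min_le_left _ _⟩
  rintro (hmono | hanti)
  · have := hmono hw₁ab htab hw₁
    have := hmono htab hw₂ab hw₂
    rcases hextr with h | h <;> linarith [h.1, h.2]
  · have := hanti hw₁ab htab hw₁
    have := hanti htab hw₂ab hw₂
    rcases hextr with h | h <;> linarith [h.1, h.2]

theorem exists_eq_c_succ {u : ℕ → ℝ} (hu0 : u 0 = 0) (hud : u d = 1)
    (hpiece : ∀ k < d, StrictMonoOn F.f (Icc (u k) (u (k + 1))) ∨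
      StrictAntiOn F.f (Icc (u k) (u (k + 1))))
    {i : ℕ} (hi : i + 1 < d) : ∃ k ≤ d, u k = F.c (i + 1) := by
  have h0 : u 0 ≤ F.c (i + 1) := hu0 ▸ F.c0 ▸ (F.c_lt_c i.succ_pos hi.le).le
  have hd : F.c (i + 1) < u d := hud ▸ F.cd ▸ F.c_lt_c hi le_rfl
  obtain ⟨k, hk, hkt, htk⟩ := exists_le_lt_succ_of_le_of_lt h0 hd
  refine ⟨k, hk.le, hkt.eq_of_not_lt fun hlt => ?_⟩
  exact F.not_strictMonoOn_or_strictAntiOn hi hlt htk (hpiece k hk)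

theorem eq_c_of_partition {u : ℕ → ℝ} (hu : StrictMonoOn u (Iic d)) (hu0 : u 0 = 0)
    (hud : u d = 1)
    (hpiece : ∀ k < d, StrictMonoOn F.f (Icc (u k) (u (k + 1))) ∨
      StrictAntiOn F.f (Icc (u k) (u (k + 1)))) {i : ℕ} (hi : i ≤ d) : u i = F.c i := by
  have hE : ∀ {i}, i + 1 < d → ∃ k ≤ d, u k = F.c (i + 1) :=
    F.exists_eq_c_succ hu0 hud hpiece
  have up : ∀ i ≤ d, u i ≤ F.c i := by
    intro i
    induction i with
    | zero => simp [hu0, F.c0]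
    | succ i ih =>
      intro hi
      rcases hi.lt_or_eq with hi | rfl
      · obtain ⟨k, hk, hkc⟩ := hE hi
        have hik : i < k := (hu.lt_iff_lt (by omega : i ≤ d) hk).1
          ((ih (by omega)).trans_lt (hkc ▸ F.c_lt_c i.lt_succ_self hi.le))
        exact hkc ▸ hu.monotoneOn hi.le hk hik
      · rw [hud, F.cd]
  have down : ∀ i ≤ d, F.c i ≤ u i := by
    intro i hi
    induction hi using Nat.decreasingInduction with
    | self => rw [hud, F.cd]
    | of_succ i hi ih =>
      rcases i with _ | i
      · simp [hu0, F.c0]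
      · obtain ⟨k, hk, hkc⟩ := hE hi
        have hki : k < i + 2 :=
          (hu.lt_iff_lt hk hi).1 (hkc ▸ (F.c_lt_c (i + 1).lt_succ_self hi).trans_le ih)
        exact hkc ▸ hu.monotoneOn hk (by omega : i + 1 ≤ d) (by omega)
  exact (up i hi).antisymm (down i hi)

theorem c_eq_of_semiconj (F' : PwMono d) {φ : ℝ → ℝ} (hφ : IsIncHomeo φ)
    (hconj : ∀ x ∈ Icc (0 : ℝ) 1, φ (F.f x) = F'.f (φ x)) {i : ℕ} (hi : i ≤ d) :
    F'.c i = φ (F.c i) := by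
  refine (F'.eq_c_of_partition (hφ.strictMonoOn.comp F.cmono fun j hj => F.c_mem_Icc hj)
    (by simp [F.c0, hφ.map_zero]) (by simp [F.cd, hφ.map_one]) (fun k hk => ?_) hi).symm
  have hsub := F.Icc_c_subset hk
  have hconj' : EqOn (φ ∘ F.f) (F'.f ∘ φ) (Icc (F.c k) (F.c (k + 1))) :=
    fun x hx => hconj x (hsub hx)
  have hmaps : MapsTo F.f (Icc (F.c k) (F.c (k + 1))) (Icc 0 1) := F.maps.mono_left hsub
  have hφ' := hφ.strictMonoOn.mono hsub
  rw [Function.comp_apply, Function.comp_apply, ← F.image_Icc_c hφ hk]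
  exact (F.piece k hk).imp
    (fun hm => strictMonoOn_image_of_comp hφ' ((hφ.strictMonoOn.comp hm hmaps).congr hconj'))
    (fun ha => strictAntiOn_image_of_comp hφ'
      ((hφ.strictMonoOn.comp_strictAntiOn ha hmaps).congr hconj'))

theorem sum_leb_image_inter_Icc_c {φ : ℝ → ℝ} (hφ : IsIncHomeo φ) {x y : ℝ} (hx : 0 ≤ x)
    (hxy : x ≤ y) (hy : y ≤ 1) :
    ∑ k ∈ Finset.range d, leb (φ '' (Icc x y ∩ Icc (F.c k) (F.c (k + 1)))) =
      leb (φ '' Icc x y) := by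
  have hxI : x ∈ Icc (0 : ℝ) 1 := ⟨hx, hxy.trans hy⟩
  have hyI : y ∈ Icc (0 : ℝ) 1 := ⟨hx.trans hxy, hy⟩
  have himage : ∀ k < d, φ '' (Icc x y ∩ Icc (F.c k) (F.c (k + 1))) =
      Icc (φ x) (φ y) ∩ Icc (φ (F.c k)) (φ (F.c (k + 1))) := fun k hk => by
    rw [hφ.strictMonoOn.injOn.image_inter (Icc_subset_Icc hx hy) (F.Icc_c_subset hk),
      hφ.image_Icc hx hxy hy, F.image_Icc_c hφ hk]
  rw [Finset.sum_congr rfl fun k hk => congrArg leb (himage k (Finset.mem_range.1 hk)),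
    sum_leb_Icc_inter_Icc (p := fun k => φ (F.c k))
      (fun k hk => hφ.strictMonoOn.monotoneOn (F.c_mem_Icc hk.le) (F.c_mem_Icc hk)
        (F.c_lt_c k.lt_succ_self hk).le)
      (by simpa [F.c0, hφ.map_zero] using (hφ.mapsTo hxI).1)
      (hφ.strictMonoOn.monotoneOn hxI hyI hxy)
      (by simpa [F.cd, hφ.map_one] using (hφ.mapsTo hyI).2),
    hφ.leb_image_Icc hx hxy hy]

/-- The one-step identity `f*(C · ψ*m₀) = C s · φ*m₀` for `ψ ∘ f = g ∘ φ`. -/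
theorem pullback_Icc_eq_of_semiconj {m : Set ℝ → ℝ} {g φ ψ : ℝ → ℝ} {C s : ℝ} (hs : 0 < s)
    (hφ : IsIncHomeo φ) (hm₀ : m ∅ = 0)
    (hm : ∀ x y : ℝ, 0 ≤ x → x ≤ y → y ≤ 1 → m (Icc x y) = C * leb (ψ '' Icc x y))
    (hsemi : ∀ x ∈ Icc (0 : ℝ) 1, ψ (F.f x) = g (φ x))
    (hg : ∀ k < d, ∀ x ∈ Icc (φ (F.c k)) (φ (F.c (k + 1))),
      ∀ y ∈ Icc (φ (F.c k)) (φ (F.c (k + 1))), |g x - g y| = s * |x - y|)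
    {x y : ℝ} (hx : 0 ≤ x) (hxy : x ≤ y) (hy : y ≤ 1) :
    pullback F.f d F.c m (Icc x y) = C * s * leb (φ '' Icc x y) := by
  have hlap : ∀ k < d, m (F.f '' (Icc x y ∩ Icc (F.c k) (F.c (k + 1)))) =
      C * s * leb (φ '' (Icc x y ∩ Icc (F.c k) (F.c (k + 1)))) := by
    intro k hk
    rw [Icc_inter_Icc]
    set a := x ⊔ F.c k
    set b := y ⊓ F.c (k + 1)
    rcases lt_or_ge b a with hba | hab
    · simp [Icc_eq_empty_of_lt hba, hm₀, leb]
    have hlap : Icc a b ⊆ Icc (F.c k) (F.c (k + 1)) := Icc_subset_Icc le_sup_right inf_le_right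
    have hI : Icc a b ⊆ Icc 0 1 := hlap.trans (F.Icc_c_subset hk)
    have ha : a ∈ Icc (0 : ℝ) 1 := hI (left_mem_Icc.2 hab)
    have hb : b ∈ Icc (0 : ℝ) 1 := hI (right_mem_Icc.2 hab)
    have hf : F.f '' Icc a b = Icc (F.f a ⊓ F.f b) (F.f a ⊔ F.f b) :=
      (F.cont.mono hI).image_Icc_eq_uIcc hab
        ((F.piece k hk).imp (·.monotoneOn.mono hlap) (·.antitoneOn.mono hlap))
    have hψf : ψ '' (F.f '' Icc a b) = g '' Icc (φ a) (φ b) := by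
      rw [image_image, ← hφ.image_Icc ha.1 hab hb.2, image_image]
      exact image_congr fun z hz => hsemi z (hI hz)
    have hφab : Icc (φ a) (φ b) ⊆ Icc (φ (F.c k)) (φ (F.c (k + 1))) :=
      Icc_subset_Icc (hφ.strictMonoOn.monotoneOn (F.c_mem_Icc hk.le) ha le_sup_right)
        (hφ.strictMonoOn.monotoneOn hb (F.c_mem_Icc hk) inf_le_right)
    have hφle : φ a ≤ φ b := hφ.strictMonoOn.monotoneOn ha hb hab
    have hgab : ∀ u ∈ Icc (φ a) (φ b), ∀ v ∈ Icc (φ a) (φ b), |g u - g v| = s * |u - v| :=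
      fun u hu v hv => hg k hk u (hφab hu) v (hφab hv)
    rw [hf, hm _ _ (le_inf (F.maps ha).1 (F.maps hb).1) inf_le_sup
      (sup_le (F.maps ha).2 (F.maps hb).2), ← hf, hψf, leb_image_Icc_of_abs_sub_eq_mul hs hφle hgab,
      hφ.leb_image_Icc ha.1 hab hb.2, mul_assoc]
  rw [pullback, Finset.sum_congr rfl fun k hk => hlap k (Finset.mem_range.1 hk), ← Finset.mul_sum,
    F.sum_leb_image_inter_Icc_c hφ hx hxy hy]

theorem iterate_pullback_leb_Icc {g H : ℕ → ℝ → ℝ} {s : ℕ → ℝ} (hs : ∀ n, 0 < s n)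
    (hH : ∀ n, IsIncHomeo (H n)) (hH0 : H 0 = id)
    (hsemi : ∀ n, ∀ x ∈ Icc (0 : ℝ) 1, H n (F.f x) = g n (H (n + 1) x))
    (hg : ∀ n, ∀ k < d, ∀ x ∈ Icc (H (n + 1) (F.c k)) (H (n + 1) (F.c (k + 1))),
      ∀ y ∈ Icc (H (n + 1) (F.c k)) (H (n + 1) (F.c (k + 1))), |g n x - g n y| = s n * |x - y|)
    (n : ℕ) : ∀ x y : ℝ, 0 ≤ x → x ≤ y → y ≤ 1 →
      (fun m => pullback F.f d F.c m)^[n] leb (Icc x y) =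
        (∏ i ∈ Finset.range n, s i) * leb (H n '' Icc x y) := by
  induction n with
  | zero => simp [hH0]
  | succ n ih =>
    intro x y hx hxy hy
    rw [Function.iterate_succ_apply', Finset.prod_range_succ]
    exact F.pullback_Icc_eq_of_semiconj (hs n) (hH (n + 1)) (iterate_pullback_leb_empty _ _ _ n)
      ih (hsemi n) (hg n) hx hxy hy

end PwMono

theorem stmt_7_general (d : ℕ) (F : ℕ → PwMono d) (g h : ℕ → ℝ → ℝ) (ct : ℕ → ℕ → ℝ) (s : ℕ → ℝ)
    (hs : ∀ n, 0 < s n)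
    -- each g n is piecewise linear of constant slope s n with turning points ct n
    (hgslope : ∀ n, ∀ k < d, ∀ x ∈ Set.Icc (ct n k) (ct n (k + 1)),
      ∀ y ∈ Set.Icc (ct n k) (ct n (k + 1)), |g n x - g n y| = s n * |x - y|)
    -- each h n is an increasing homeomorphism of I fixing the endpoints,
    -- mapping the turning points of f n to those of g n
    (hhc : ∀ n, ContinuousOn (h n) (Set.Icc 0 1)) (hhm : ∀ n, StrictMonoOn (h n) (Set.Icc 0 1))
    (hh0 : ∀ n, h n 0 = 0) (hh1 : ∀ n, h n 1 = 1)
    (hhct : ∀ n, ∀ i ≤ d, h n ((F n).c i) = ct n i)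
    -- tower relations:  f n = g n ∘ h n  and  f (n+1) = h n ∘ g n  on I
    (hfac : ∀ n, ∀ x ∈ Set.Icc (0 : ℝ) 1, (F n).f x = g n (h n x))
    (hnext : ∀ n, ∀ x ∈ Set.Icc (0 : ℝ) 1, (F (n + 1)).f x = h n (g n x))
    -- H n = h (n-1) ∘ ⋯ ∘ h 0
    (H : ℕ → ℝ → ℝ) (hH0 : H 0 = id) (hHs : ∀ n, H (n + 1) = h n ∘ H n) :
    ∀ n : ℕ, 1 ≤ n → ∀ x y : ℝ, 0 ≤ x → x ≤ y → y ≤ 1 →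
      (fun m => pullback (F 0).f d (F 0).c m)^[n] leb (Set.Icc x y) =
        (∏ i ∈ Finset.range n, s i) * leb (H n '' Set.Icc x y) := by
  have hh : ∀ n, IsIncHomeo (h n) := fun n => ⟨hhc n, hhm n, hh0 n, hh1 n⟩
  have hH : ∀ n, IsIncHomeo (H n) := fun n => by
    induction n with
    | zero => exact hH0 ▸ IsIncHomeo.id
    | succ n ih => exact hHs n ▸ (hh n).comp ih
  have hconj : ∀ n, ∀ x ∈ Icc (0 : ℝ) 1, H n ((F 0).f x) = (F n).f (H n x) := by
    intro n
    induction n with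
    | zero => simp [hH0]
    | succ n ih =>
      intro x hx
      have hHx := (hH n).mapsTo hx
      rw [hHs, Function.comp_apply, Function.comp_apply, ih x hx, hfac n _ hHx,
        hnext n _ ((hh n).mapsTo hHx)]
  have hc : ∀ n, ∀ k ≤ d, H (n + 1) ((F 0).c k) = ct n k := fun n k hk => by
    rw [hHs, Function.comp_apply, ← (F 0).c_eq_of_semiconj (F n) (hH n) (hconj n) hk, hhct n k hk]
  intro n _ x y hx hxy hy
  refine (F 0).iterate_pullback_leb_Icc (g := g) hs hH hH0 (fun n x hx => ?_) (fun n k hk => ?_)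
    n x y hx hxy hy
  · rw [hconj n x hx, hfac n _ ((hH n).mapsTo hx), hHs, Function.comp_apply]
  · rw [hc n k hk.le, hc n (k + 1) hk]
    exact hgslope n k hk

/-- in the tower algorithm, `(f*)ⁿ(m₀) = s₀ s₁ ⋯ s_{n-1} · Hₙ*(m₀)`
where `Hₙ = h_{n-1} ∘ ⋯ ∘ h₀`. -/
theorem stmt_7 (d : ℕ) (F : ℕ → PwMono d) (g h : ℕ → ℝ → ℝ) (ct : ℕ → ℕ → ℝ) (s : ℕ → ℝ)
    (hs : ∀ n, 0 < s n)
    -- each g n is piecewise linear of constant slope s n with turning points ct n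
    (hct0 : ∀ n, ct n 0 = 0) (hctd : ∀ n, ct n d = 1)
    (hctmono : ∀ n, StrictMonoOn (ct n) (Set.Iic d))
    (hgslope : ∀ n, ∀ k < d, ∀ x ∈ Set.Icc (ct n k) (ct n (k + 1)),
      ∀ y ∈ Set.Icc (ct n k) (ct n (k + 1)), |g n x - g n y| = s n * |x - y|)
    -- g n has the same critical value vector as f n
    (hgcv : ∀ n, ∀ i ≤ d, g n (ct n i) = (F n).f ((F n).c i))
    -- each h n is an increasing homeomorphism of I fixing the endpoints,
    -- mapping the turning points of f n to those of g n
    (hhc : ∀ n, ContinuousOn (h n) (Set.Icc 0 1)) (hhm : ∀ n, StrictMonoOn (h n) (Set.Icc 0 1))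
    (hh0 : ∀ n, h n 0 = 0) (hh1 : ∀ n, h n 1 = 1)
    (hhct : ∀ n, ∀ i ≤ d, h n ((F n).c i) = ct n i)
    -- tower relations:  f n = g n ∘ h n  and  f (n+1) = h n ∘ g n  on I
    (hfac : ∀ n, ∀ x ∈ Set.Icc (0 : ℝ) 1, (F n).f x = g n (h n x))
    (hnext : ∀ n, ∀ x ∈ Set.Icc (0 : ℝ) 1, (F (n + 1)).f x = h n (g n x))
    -- H n = h (n-1) ∘ ⋯ ∘ h 0
    (H : ℕ → ℝ → ℝ) (hH0 : H 0 = id) (hHs : ∀ n, H (n + 1) = h n ∘ H n) :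
    ∀ n : ℕ, 1 ≤ n → ∀ x y : ℝ, 0 ≤ x → x ≤ y → y ≤ 1 →
      (fun m => pullback (F 0).f d (F 0).c m)^[n] leb (Set.Icc x y) =
        (∏ i ∈ Finset.range n, s i) * leb (H n '' Set.Icc x y) :=
  stmt_7_general d F g h ct s hs hgslope hhc hhm hh0 hh1 hhct hfac hnext H hH0 hHs
end

section
/- For a piecewise monotone map f, the total variation of f^n over a subinterval J equals the L¹-norm (with respect to Lebesgue measure) of L^n χ_J: Var_J(f^n) = ‖L^n χ_J‖_{L¹}. -/
open Set

/-- The transfer operator with constant potential 1. -/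
noncomputable def transferOp (f : ℝ → ℝ) (d : ℕ) (c : ℕ → ℝ) (finv : ℕ → ℝ → ℝ)
    (φ : ℝ → ℝ) : ℝ → ℝ :=
  fun x => ∑ k ∈ Finset.range d,
    φ (finv k x) * (f '' Set.Icc (c k) (c (k + 1))).indicator (fun _ => (1 : ℝ)) x

/-!
Both sides split over the laps `Iₖ = [c k, c (k+1)]`. Since `f` is monotone on each lap,
`Var_J(fⁿ⁺¹) = ∑ₖ Var_{f(J ∩ Iₖ)}(fⁿ)`, while `L χ_J = ∑ₖ χ_{f(J ∩ Iₖ)}` and `Lⁿ` is linear.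
By continuity each `f(J ∩ Iₖ)` is again a (possibly empty) closed subinterval of `[0,1]`, so
induction on `n` over all such intervals reduces the claim to `n = 0`, where both sides are
the length of `J`.
-/

open MeasureTheory

theorem eVariationOn.inter_Icc_add_inter_Icc {α E : Type*} [LinearOrder α]
    [PseudoEMetricSpace E] (g : α → E) {s : Set α} (hs : s.OrdConnected) {a b c : α}
    (hab : a ≤ b) (hbc : b ≤ c) :
    eVariationOn g (s ∩ Icc a b) + eVariationOn g (s ∩ Icc b c) =
      eVariationOn g (s ∩ Icc a c) := by
  by_cases hb : b ∈ s
  · exact eVariationOn.Icc_add_Icc g hab hbc hb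
  have hside : (∀ z ∈ s, z < b) ∨ ∀ z ∈ s, b < z := by
    by_contra! h
    obtain ⟨⟨z₁, hz₁, hbz₁⟩, ⟨z₂, hz₂, hz₂b⟩⟩ := h
    exact hb (hs.out hz₂ hz₁ ⟨hz₂b, hbz₁⟩)
  rcases hside with hlt | hgt
  · have hempty : s ∩ Icc b c = ∅ :=
      eq_empty_of_forall_notMem fun z hz => (hlt z hz.1).not_ge hz.2.1
    have hsame : s ∩ Icc a c = s ∩ Icc a b := by
      ext z
      constructor
      · exact fun hz => ⟨hz.1, hz.2.1, (hlt z hz.1).le⟩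
      · exact fun hz => ⟨hz.1, hz.2.1, hz.2.2.trans hbc⟩
    rw [hempty, hsame, eVariationOn.subsingleton g subsingleton_empty, add_zero]
  · have hempty : s ∩ Icc a b = ∅ :=
      eq_empty_of_forall_notMem fun z hz => (hgt z hz.1).not_ge hz.2.2
    have hsame : s ∩ Icc a c = s ∩ Icc b c := by
      ext z
      constructor
      · exact fun hz => ⟨hz.1, (hgt z hz.1).le, hz.2.2⟩
      · exact fun hz => ⟨hz.1, hab.trans hz.2.1, hz.2.2⟩
    rw [hempty, hsame, eVariationOn.subsingleton g subsingleton_empty, zero_add]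

theorem eVariationOn.sum_inter_Icc {α E : Type*} [LinearOrder α] [PseudoEMetricSpace E]
    (g : α → E) {s : Set α} (hs : s.OrdConnected) {u : ℕ → α} {n : ℕ}
    (hu : MonotoneOn u (Iic n)) :
    ∑ k ∈ Finset.range n, eVariationOn g (s ∩ Icc (u k) (u (k + 1))) =
      eVariationOn g (s ∩ Icc (u 0) (u n)) := by
  induction n with
  | zero => simp [Subsingleton.inter_singleton]
  | succ n ih =>
    have hu0n : u 0 ≤ u n := hu (mem_Iic.2 n.succ.zero_le) (mem_Iic.2 n.le_succ) n.zero_le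
    have hunn : u n ≤ u (n + 1) := hu (mem_Iic.2 n.le_succ) (mem_Iic.2 le_rfl) n.le_succ
    rw [Finset.sum_range_succ, ih (hu.mono (Iic_subset_Iic.2 n.le_succ)),
      eVariationOn.inter_Icc_add_inter_Icc g hs hu0n hunn]

theorem exists_image_Icc_eq_Icc {f : ℝ → ℝ} (hf : ContinuousOn f (Icc 0 1))
    (hmaps : MapsTo f (Icc 0 1) (Icc 0 1)) {a b : ℝ} (ha : 0 ≤ a) (hb : b ≤ 1) :
    ∃ p q : ℝ, 0 ≤ p ∧ q ≤ 1 ∧ f '' Icc a b = Icc p q := by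
  by_cases hab : a ≤ b
  · have hsub : Icc a b ⊆ Icc 0 1 := Icc_subset_Icc ha hb
    have himage : (f '' Icc a b).Nonempty := (nonempty_Icc.2 hab).image f
    refine ⟨_, _, ?_, ?_, (hf.mono hsub).image_Icc hab⟩
    · exact le_csInf himage fun _ ⟨z, hz, hfz⟩ => hfz ▸ (hmaps (hsub hz)).1
    · exact csSup_le himage fun _ ⟨z, hz, hfz⟩ => hfz ▸ (hmaps (hsub hz)).2
  · exact ⟨a, b, ha, hb, by rw [Icc_eq_empty hab, image_empty]⟩

structure IsBranchInverse (f : ℝ → ℝ) (d : ℕ) (c : ℕ → ℝ) (finv : ℕ → ℝ → ℝ) : Prop where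
  inv_apply : ∀ k < d, ∀ x ∈ Icc (c k) (c (k + 1)), finv k (f x) = x
  apply_inv : ∀ k < d, ∀ y ∈ f '' Icc (c k) (c (k + 1)),
    finv k y ∈ Icc (c k) (c (k + 1)) ∧ f (finv k y) = y

section TransferOperator

variable (f : ℝ → ℝ) (d : ℕ) (c : ℕ → ℝ) (finv : ℕ → ℝ → ℝ)

theorem transferOp_finset_sum {ι : Type*} (s : Finset ι) (φ : ι → ℝ → ℝ) :
    transferOp f d c finv (fun x => ∑ i ∈ s, φ i x) =
      fun x => ∑ i ∈ s, transferOp f d c finv (φ i) x := by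
  funext x
  simp only [transferOp, Finset.sum_mul]
  exact Finset.sum_comm

theorem iterate_transferOp_finset_sum (n : ℕ) {ι : Type*} (s : Finset ι) (φ : ι → ℝ → ℝ) :
    (transferOp f d c finv)^[n] (fun x => ∑ i ∈ s, φ i x) =
      fun x => ∑ i ∈ s, (transferOp f d c finv)^[n] (φ i) x := by
  induction n generalizing φ with
  | zero => rfl
  | succ n ih =>
    rw [Function.iterate_succ_apply, transferOp_finset_sum, ih]
    rfl

theorem iterate_transferOp_nonneg (n : ℕ) {φ : ℝ → ℝ} (hφ : 0 ≤ φ) :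
    0 ≤ (transferOp f d c finv)^[n] φ := by
  induction n generalizing φ with
  | zero => exact hφ
  | succ n ih =>
    refine ih fun x => Finset.sum_nonneg fun k _ => mul_nonneg (hφ _) ?_
    exact indicator_nonneg (fun _ _ => zero_le_one) _

theorem iterate_transferOp_indicator_nonneg (n : ℕ) (J : Set ℝ) (z : ℝ) :
    0 ≤ (transferOp f d c finv)^[n] (J.indicator fun _ => (1 : ℝ)) z :=
  iterate_transferOp_nonneg f d c finv n (indicator_nonneg fun _ _ => zero_le_one) z

variable {f d c finv}

theorem transferOp_indicator
    (hfinv : IsBranchInverse f d c finv) (J : Set ℝ) :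
    transferOp f d c finv (J.indicator fun _ => (1 : ℝ)) =
      fun z => ∑ k ∈ Finset.range d,
        (f '' (J ∩ Icc (c k) (c (k + 1)))).indicator (fun _ => (1 : ℝ)) z := by
  funext z
  refine Finset.sum_congr rfl fun k hk => ?_
  rw [Finset.mem_range] at hk
  by_cases hz : z ∈ f '' Icc (c k) (c (k + 1))
  · obtain ⟨hmem, hfz⟩ := hfinv.apply_inv k hk z hz
    rw [indicator_of_mem hz, mul_one]
    by_cases hJ : finv k z ∈ J
    · have hzJ : z ∈ f '' (J ∩ Icc (c k) (c (k + 1))) := ⟨finv k z, ⟨hJ, hmem⟩, hfz⟩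
      rw [indicator_of_mem hJ, indicator_of_mem hzJ]
    · refine (indicator_of_notMem hJ _).trans (indicator_of_notMem ?_ _).symm
      rintro ⟨w, ⟨hwJ, hwI⟩, rfl⟩
      exact hJ (by rwa [hfinv.inv_apply k hk w hwI])
  · have hz' : z ∉ f '' (J ∩ Icc (c k) (c (k + 1))) :=
      fun h => hz (image_mono inter_subset_right h)
    rw [indicator_of_notMem hz, mul_zero, indicator_of_notMem hz']

theorem iterate_succ_transferOp_indicator
    (hfinv : IsBranchInverse f d c finv) (n : ℕ) (J : Set ℝ) :
    (transferOp f d c finv)^[n + 1] (J.indicator fun _ => (1 : ℝ)) =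
      fun z => ∑ k ∈ Finset.range d, (transferOp f d c finv)^[n]
        ((f '' (J ∩ Icc (c k) (c (k + 1)))).indicator fun _ => (1 : ℝ)) z := by
  rw [Function.iterate_succ_apply, transferOp_indicator hfinv,
    iterate_transferOp_finset_sum]

end TransferOperator

namespace PwMono

variable {d : ℕ} (F : PwMono d)

theorem exists_image_inter_piece_eq_Icc {a b : ℝ} (ha : 0 ≤ a) (hb : b ≤ 1) (k : ℕ) :
    ∃ p q : ℝ, 0 ≤ p ∧ q ≤ 1 ∧ F.f '' (Icc a b ∩ Icc (F.c k) (F.c (k + 1))) = Icc p q := by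
  rw [Icc_inter_Icc]
  exact exists_image_Icc_eq_Icc F.cont F.maps (ha.trans (le_max_left _ _))
    ((min_le_left _ _).trans hb)

theorem eVariationOn_comp_inter_piece {E : Type*} [PseudoEMetricSpace E] (g : ℝ → E)
    (J : Set ℝ) {k : ℕ} (hk : k < d) :
    eVariationOn (g ∘ F.f) (J ∩ Icc (F.c k) (F.c (k + 1))) =
      eVariationOn g (F.f '' (J ∩ Icc (F.c k) (F.c (k + 1)))) := by
  rcases F.piece k hk with hmono | hanti
  · exact eVariationOn.comp_eq_of_monotoneOn g F.f (hmono.monotoneOn.mono inter_subset_right)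
  · exact eVariationOn.comp_eq_of_antitoneOn g F.f (hanti.antitoneOn.mono inter_subset_right)

theorem eVariationOn_comp_Icc {E : Type*} [PseudoEMetricSpace E] (g : ℝ → E)
    {a b : ℝ} (ha : 0 ≤ a) (hb : b ≤ 1) :
    eVariationOn (g ∘ F.f) (Icc a b) = ∑ k ∈ Finset.range d,
      eVariationOn g (F.f '' (Icc a b ∩ Icc (F.c k) (F.c (k + 1)))) := by
  have hpieces : Icc a b ∩ Icc (F.c 0) (F.c d) = Icc a b := by
    rw [F.c0, F.cd]
    exact inter_eq_left.2 (Icc_subset_Icc ha hb)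
  rw [← hpieces, ← eVariationOn.sum_inter_Icc _ ordConnected_Icc F.cmono.monotoneOn, hpieces]
  exact Finset.sum_congr rfl fun k hk =>
    F.eVariationOn_comp_inter_piece g _ (Finset.mem_range.1 hk)

variable {finv : ℕ → ℝ → ℝ}

theorem integrableOn_iterate_transferOp_indicator_Icc
    (hfinv : IsBranchInverse F.f d F.c finv) (n : ℕ) :
    ∀ {a b : ℝ}, 0 ≤ a → b ≤ 1 → IntegrableOn
      ((transferOp F.f d F.c finv)^[n] ((Icc a b).indicator fun _ => (1 : ℝ))) (Icc 0 1) := by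
  induction n with
  | zero =>
    intro a b _ _
    exact (integrableOn_const (by simp [Real.volume_Icc])).indicator measurableSet_Icc
  | succ n ih =>
    intro a b ha hb
    rw [iterate_succ_transferOp_indicator hfinv]
    refine integrable_finsetSum _ fun k _ => ?_
    obtain ⟨p, q, hp, hq, himage⟩ := F.exists_image_inter_piece_eq_Icc ha hb k
    rw [himage]
    exact ih hp hq

theorem eVariationOn_iterate_eq_integral_transferOp
    (hfinv : IsBranchInverse F.f d F.c finv) (n : ℕ) :
    ∀ {a b : ℝ}, 0 ≤ a → b ≤ 1 → eVariationOn (F.f^[n]) (Icc a b) =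
      ENNReal.ofReal (∫ z in Icc (0 : ℝ) 1,
        (transferOp F.f d F.c finv)^[n] ((Icc a b).indicator fun _ => (1 : ℝ)) z) := by
  induction n with
  | zero =>
    intro a b ha hb
    rw [Function.iterate_zero, eVariationOn_id_Icc, Function.iterate_zero_apply,
      setIntegral_indicator measurableSet_Icc, inter_eq_right.2 (Icc_subset_Icc ha hb),
      setIntegral_const, smul_eq_mul, mul_one, Real.volume_real_Icc]
    simp
  | succ n ih =>
    intro a b ha hb
    set χ : ℕ → ℝ → ℝ := fun k =>
      (F.f '' (Icc a b ∩ Icc (F.c k) (F.c (k + 1)))).indicator fun _ => (1 : ℝ)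
    have hpiece : ∀ k, eVariationOn (F.f^[n]) (F.f '' (Icc a b ∩ Icc (F.c k) (F.c (k + 1)))) =
        ENNReal.ofReal (∫ z in Icc (0 : ℝ) 1, (transferOp F.f d F.c finv)^[n] (χ k) z) ∧
        IntegrableOn ((transferOp F.f d F.c finv)^[n] (χ k)) (Icc 0 1) := by
      intro k
      obtain ⟨p, q, hp, hq, himage⟩ := F.exists_image_inter_piece_eq_Icc ha hb k
      simp only [χ, himage]
      exact ⟨ih hp hq, F.integrableOn_iterate_transferOp_indicator_Icc hfinv n hp hq⟩
    calc eVariationOn (F.f^[n + 1]) (Icc a b)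
        = ∑ k ∈ Finset.range d,
            eVariationOn (F.f^[n]) (F.f '' (Icc a b ∩ Icc (F.c k) (F.c (k + 1)))) := by
          rw [Function.iterate_succ, F.eVariationOn_comp_Icc _ ha hb]
      _ = ∑ k ∈ Finset.range d,
            ENNReal.ofReal (∫ z in Icc (0 : ℝ) 1, (transferOp F.f d F.c finv)^[n] (χ k) z) :=
          Finset.sum_congr rfl fun k _ => (hpiece k).1
      _ = ENNReal.ofReal (∑ k ∈ Finset.range d,
            ∫ z in Icc (0 : ℝ) 1, (transferOp F.f d F.c finv)^[n] (χ k) z) :=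
          (ENNReal.ofReal_sum_of_nonneg fun k _ => setIntegral_nonneg measurableSet_Icc
            fun z _ => iterate_transferOp_indicator_nonneg _ _ _ _ n _ z).symm
      _ = ENNReal.ofReal (∫ z in Icc (0 : ℝ) 1,
            (transferOp F.f d F.c finv)^[n + 1] ((Icc a b).indicator fun _ => (1 : ℝ)) z) := by
          rw [iterate_succ_transferOp_indicator hfinv,
            integral_finsetSum _ fun k _ => (hpiece k).2]

end PwMono

theorem stmt_10_general (d : ℕ) (F : PwMono d) (finv : ℕ → ℝ → ℝ)
    (hinv : ∀ k < d, ∀ x ∈ Set.Icc (F.c k) (F.c (k + 1)), finv k (F.f x) = x)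
    (hinv' : ∀ k < d, ∀ y ∈ F.f '' Set.Icc (F.c k) (F.c (k + 1)),
      finv k y ∈ Set.Icc (F.c k) (F.c (k + 1)) ∧ F.f (finv k y) = y)
    (x y : ℝ) (hx : 0 ≤ x) (hy : y ≤ 1) (n : ℕ) :
    (eVariationOn (F.f^[n]) (Set.Icc x y)).toReal =
      ∫ z in Set.Icc (0 : ℝ) 1,
        |(transferOp F.f d F.c finv)^[n] ((Set.Icc x y).indicator fun _ => (1 : ℝ)) z| := by
  have hnonneg := iterate_transferOp_indicator_nonneg F.f d F.c finv n (Icc x y)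
  rw [F.eVariationOn_iterate_eq_integral_transferOp ⟨hinv, hinv'⟩ n hx hy,
    ENNReal.toReal_ofReal (setIntegral_nonneg measurableSet_Icc fun z _ => hnonneg z)]
  simp only [abs_of_nonneg (hnonneg _)]

/-- `Var_J(fⁿ) = ‖Lⁿ χ_J‖_{L¹}` with respect to Lebesgue measure. -/
theorem stmt_10 (d : ℕ) (F : PwMono d) (finv : ℕ → ℝ → ℝ)
    (hinv : ∀ k < d, ∀ x ∈ Set.Icc (F.c k) (F.c (k + 1)), finv k (F.f x) = x)
    (hinv' : ∀ k < d, ∀ y ∈ F.f '' Set.Icc (F.c k) (F.c (k + 1)),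
      finv k y ∈ Set.Icc (F.c k) (F.c (k + 1)) ∧ F.f (finv k y) = y)
    (x y : ℝ) (hx : 0 ≤ x) (hxy : x ≤ y) (hy : y ≤ 1) (n : ℕ) :
    (eVariationOn (F.f^[n]) (Set.Icc x y)).toReal =
      ∫ z in Set.Icc (0 : ℝ) 1,
        |(transferOp F.f d F.c finv)^[n] ((Set.Icc x y).indicator fun _ => (1 : ℝ)) z| :=
  stmt_10_general d F finv hinv hinv' x y hx hy n
end

section
/- Let f be a unimodal map with turning point c and let J ⊆ I be a closed interval. If J is slow (there is no k ≥ 0 with c ∈ f^k(J) and c ∈ f^{k+1}(J)), then the number of laps satisfies ℓ(f^n, J) ≤ 2^{⌈n/2⌉+1} for all n ≥ 1; consequently Var_J(f^n) ≤ C·2^{n/2} for a constant C independent of n. -/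
open Set

/-- `LapsLE g a b N`: the restriction of `g` to `[a,b]` has at most `N` laps
(intervals of monotonicity). -/
def LapsLE (g : ℝ → ℝ) (a b : ℝ) (N : ℕ) : Prop :=
  ∃ t : ℕ → ℝ, t 0 = a ∧ t N = b ∧ (∀ i j, i ≤ j → j ≤ N → t i ≤ t j) ∧
    ∀ k < N, MonotoneOn g (Set.Icc (t k) (t (k + 1))) ∨
      AntitoneOn g (Set.Icc (t k) (t (k + 1)))

/-!
Write `g = fⁿ` and take a lap `[u, v]` of `g` inside `J`. If `g` misses the turning point `c` on
`[u, v]`, then `f ∘ g` is still monotone there and `fⁿ⁺² = f ∘ (f ∘ g)` breaks it at most once,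
where `f ∘ g` crosses `c`. If instead `f ∘ g` misses `c`, break `[u, v]` where `g` crosses `c`;
on both halves `f ∘ g` is monotone and avoids `c`, so `fⁿ⁺²` is monotone. Slowness of `J` puts
every `n` in one of the two cases, hence `ℓ(fⁿ⁺², J) ≤ 2 ℓ(fⁿ, J)`. Each lap contributes at most
`|I| = 1` to the variation, so `Var_J(fⁿ) ≤ ℓ(fⁿ, J)`.
-/

def MonotoneOrAntitoneOn {α β : Type*} [Preorder α] [Preorder β] (f : α → β) (s : Set α) :
    Prop :=
  MonotoneOn f s ∨ AntitoneOn f s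

namespace MonotoneOrAntitoneOn

variable {α β γ : Type*} [Preorder α] [Preorder β] [Preorder γ]

theorem mono {g : α → β} {s s' : Set α} (h : MonotoneOrAntitoneOn g s) (hs : s' ⊆ s) :
    MonotoneOrAntitoneOn g s' :=
  h.imp (fun h => h.mono hs) (fun h => h.mono hs)

theorem comp {f : β → γ} {g : α → β} {s : Set α} {t : Set β}
    (hf : MonotoneOrAntitoneOn f t) (hg : MonotoneOrAntitoneOn g s) (hst : MapsTo g s t) :
    MonotoneOrAntitoneOn (f ∘ g) s := by
  rcases hf with hf | hf <;> rcases hg with hg | hg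
  exacts [.inl (hf.comp hg hst), .inr (hf.comp_AntitoneOn hg hst),
    .inr (hf.comp_MonotoneOn hg hst), .inl (hf.comp hg hst)]

theorem of_subsingleton {g : α → β} {s : Set α} (hs : s.Subsingleton) :
    MonotoneOrAntitoneOn g s :=
  .inl (hs.monotoneOn g)

theorem eVariationOn_Icc_le {g : ℝ → ℝ} {u v p q : ℝ} (h : MonotoneOrAntitoneOn g (Icc u v))
    (huv : u ≤ v) (hm : MapsTo g (Icc u v) (Icc p q)) :
    eVariationOn g (Icc u v) ≤ ENNReal.ofReal (q - p) := by
  have hu : u ∈ Icc u v := left_mem_Icc.2 huv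
  have hv : v ∈ Icc u v := right_mem_Icc.2 huv
  rcases h with h | h
  · rw [← inter_self (Icc u v), h.eVariationOn_eq hu hv]
    exact ENNReal.ofReal_le_ofReal (by linarith [(hm hv).2, (hm hu).1])
  · have hneg : eVariationOn (fun x => -g x) (Icc u v) = eVariationOn g (Icc u v) := by
      simp only [eVariationOn, edist_neg_neg]
    rw [← hneg, ← inter_self (Icc u v), h.neg.eVariationOn_eq hu hv]
    exact ENNReal.ofReal_le_ofReal (by linarith [(hm hu).2, (hm hv).1])

end MonotoneOrAntitoneOn

section Laps

variable {g : ℝ → ℝ} {a b c : ℝ} {N K : ℕ}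

theorem lapsLE_of_le_succ {t : ℕ → ℝ} (h0 : t 0 = a) (hN : t N = b)
    (hle : ∀ k < N, t k ≤ t (k + 1))
    (hlap : ∀ k < N, MonotoneOrAntitoneOn g (Icc (t k) (t (k + 1)))) : LapsLE g a b N := by
  have hmono : MonotoneOn t (Iic N) :=
    monotoneOn_of_le_succ ordConnected_Iic fun k _ _ hk => hle k (Nat.succ_le_iff.1 hk)
  exact ⟨t, h0, hN, fun i j hij hj => hmono (hij.trans hj) hj hij, hlap⟩

theorem lapsLE_self (g : ℝ → ℝ) (a : ℝ) (N : ℕ) : LapsLE g a a N :=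
  lapsLE_of_le_succ (t := fun _ => a) rfl rfl (fun _ _ => le_rfl)
    fun _ _ => .of_subsingleton (subsingleton_Icc_of_ge le_rfl)

theorem lapsLE_one (hab : a ≤ b) (hg : MonotoneOrAntitoneOn g (Icc a b)) : LapsLE g a b 1 :=
  lapsLE_of_le_succ (t := fun k => if k = 0 then a else b) rfl rfl
    (fun k hk => by simp [Nat.lt_one_iff.1 hk, hab])
    (fun k hk => by simpa [Nat.lt_one_iff.1 hk] using hg)

namespace LapsLE

theorem append (h₁ : LapsLE g a b N) (h₂ : LapsLE g b c K) : LapsLE g a c (N + K) := by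
  obtain ⟨t, h0, hN, hmono, hlap⟩ := h₁
  obtain ⟨t', h0', hK', hmono', hlap'⟩ := h₂
  refine lapsLE_of_le_succ (t := fun i => if i ≤ N then t i else t' (i - N))
    (by simp [h0]) ?_ (fun k hk => ?_) (fun k hk => ?_)
  · obtain rfl | hK := K.eq_zero_or_pos
    · simp [hN, ← hK', h0']
    · simp [hK', show ¬ N + K ≤ N by omega]
  · rcases lt_or_ge k N with hkN | hkN
    · simpa [hkN.le, Nat.succ_le_of_lt hkN] using hmono k (k + 1) k.le_succ hkN
    · have : t' (k - N) ≤ t' (k + 1 - N) := hmono' _ _ (by omega) (by omega)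
      rcases hkN.eq_or_lt with rfl | hkN
      · simpa [hN, h0'] using this
      · simpa [hkN.not_ge, show ¬ k + 1 ≤ N by omega] using this
  · rcases lt_or_ge k N with hkN | hkN
    · simpa [MonotoneOrAntitoneOn, hkN.le, Nat.succ_le_of_lt hkN] using hlap k hkN
    · have := hlap' (k - N) (by omega)
      rw [show k - N + 1 = k + 1 - N by omega] at this
      rcases hkN.eq_or_lt with rfl | hkN
      · simpa [MonotoneOrAntitoneOn, hN, h0'] using this
      · simpa [MonotoneOrAntitoneOn, hkN.not_ge, show ¬ k + 1 ≤ N by omega] using this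

theorem mono (h : LapsLE g a b N) (hNK : N ≤ K) : LapsLE g a b K := by
  simpa [Nat.add_sub_cancel' hNK] using h.append (lapsLE_self g b (K - N))

theorem eq_of_zero (h : LapsLE g a b 0) : a = b := by
  obtain ⟨t, h0, hN, -⟩ := h
  exact h0 ▸ hN

theorem exists_last (h : LapsLE g a b (N + 1)) :
    ∃ c, a ≤ c ∧ c ≤ b ∧ LapsLE g a c N ∧ MonotoneOrAntitoneOn g (Icc c b) := by
  obtain ⟨t, h0, hN, hmono, hlap⟩ := h
  refine ⟨t N, h0 ▸ hmono 0 N N.zero_le N.le_succ, hN ▸ hmono N (N + 1) N.le_succ le_rfl,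
    ⟨t, h0, rfl, fun i j hij hj => hmono i j hij (hj.trans N.le_succ),
      fun k hk => hlap k (hk.trans N.lt_succ_self)⟩, hN ▸ hlap N N.lt_succ_self⟩

theorem two_of_le (hab : a ≤ b) (hbc : b ≤ c) (h₁ : MonotoneOrAntitoneOn g (Icc a b))
    (h₂ : MonotoneOrAntitoneOn g (Icc b c)) : LapsLE g a c 2 :=
  (lapsLE_one hab h₁).append (lapsLE_one hbc h₂)

theorem refine {f : ℝ → ℝ} {M : ℕ} (h : LapsLE g a b N)
    (H : ∀ u v, a ≤ u → u ≤ v → v ≤ b → MonotoneOrAntitoneOn g (Icc u v) → LapsLE f u v M) :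
    LapsLE f a b (M * N) := by
  induction N generalizing b with
  | zero => exact h.eq_of_zero ▸ lapsLE_self f a 0
  | succ N ih =>
    obtain ⟨c, hac, hcb, hN, hlast⟩ := h.exists_last
    exact (ih hN fun u v hau huv hvc => H u v hau huv (hvc.trans hcb)).append
      (H c b hac hcb le_rfl hlast)

theorem eVariationOn_le {p q : ℝ} (h : LapsLE g a b N) (hm : MapsTo g (Icc a b) (Icc p q)) :
    eVariationOn g (Icc a b) ≤ N * ENNReal.ofReal (q - p) := by
  induction N generalizing b with
  | zero => simp [← h.eq_of_zero]
  | succ N ih =>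
    obtain ⟨c, hac, hcb, hN, hlast⟩ := h.exists_last
    have hsplit := eVariationOn.Icc_add_Icc g hac hcb (mem_Icc.2 ⟨hac, hcb⟩)
    rw [inter_self, Icc_inter_Icc, Icc_inter_Icc] at hsplit
    simp only [max_self, min_self, min_eq_right hcb, max_eq_right hac] at hsplit
    rw [← hsplit, Nat.cast_succ, add_mul, one_mul]
    exact add_le_add (ih hN (hm.mono_left (Icc_subset_Icc le_rfl hcb)))
      (hlast.eVariationOn_Icc_le hcb (hm.mono_left (Icc_subset_Icc hac le_rfl)))

end LapsLE

end Laps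

theorem mapsTo_Iic_or_Ici_of_notMem_image {α β : Type*} [TopologicalSpace α]
    [TopologicalSpace β] [LinearOrder β] [OrderClosedTopology β] {h : α → β} {s : Set α}
    {c : β} (hs : IsPreconnected s) (hh : ContinuousOn h s) (hc : c ∉ h '' s) :
    MapsTo h s (Iic c) ∨ MapsTo h s (Ici c) := by
  by_contra! H
  simp only [MapsTo, not_forall, mem_Iic, mem_Ici, not_le] at H
  obtain ⟨⟨x, hx, hcx⟩, ⟨y, hy, hyc⟩⟩ := H
  exact hc <| (hs.image h hh).Icc_subset (mem_image_of_mem h hy) (mem_image_of_mem h hx)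
    ⟨hyc.le, hcx.le⟩

theorem MonotoneOrAntitoneOn.exists_mapsTo_Iic_or_Ici {h : ℝ → ℝ} {u v c : ℝ} (huv : u ≤ v)
    (hh : ContinuousOn h (Icc u v)) (hmono : MonotoneOrAntitoneOn h (Icc u v)) :
    ∃ w ∈ Icc u v, (MapsTo h (Icc u w) (Iic c) ∨ MapsTo h (Icc u w) (Ici c)) ∧
      (MapsTo h (Icc w v) (Iic c) ∨ MapsTo h (Icc w v) (Ici c)) := by
  by_cases hc : c ∈ h '' Icc u v
  · obtain ⟨w, hw, rfl⟩ := hc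
    have hl : ∀ x ∈ Icc u w, x ∈ Icc u v := fun x hx => ⟨hx.1, hx.2.trans hw.2⟩
    have hr : ∀ x ∈ Icc w v, x ∈ Icc u v := fun x hx => ⟨hw.1.trans hx.1, hx.2⟩
    refine ⟨w, hw, ?_⟩
    rcases hmono with hmono | hmono
    · exact ⟨.inl fun x hx => hmono (hl x hx) hw hx.2, .inr fun x hx => hmono hw (hr x hx) hx.1⟩
    · exact ⟨.inr fun x hx => hmono (hl x hx) hw hx.2, .inl fun x hx => hmono hw (hr x hx) hx.1⟩
  · refine ⟨u, left_mem_Icc.2 huv, ?_,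
      mapsTo_Iic_or_Ici_of_notMem_image isPreconnected_Icc hh hc⟩
    rw [Icc_self, mapsTo_singleton, mapsTo_singleton]
    exact le_total (h u) c

section Unimodal

variable {f g : ℝ → ℝ} {c u v : ℝ}

theorem MonotoneOrAntitoneOn.comp_of_mapsTo_Iic_or_Ici {s : Set ℝ}
    (hg : MonotoneOrAntitoneOn g s) (hL : MonotoneOrAntitoneOn f (Icc 0 c))
    (hR : MonotoneOrAntitoneOn f (Icc c 1)) (hgm : MapsTo g s (Icc 0 1))
    (hside : MapsTo g s (Iic c) ∨ MapsTo g s (Ici c)) : MonotoneOrAntitoneOn (f ∘ g) s := by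
  rcases hside with hside | hside
  · exact hL.comp hg fun x hx => ⟨(hgm hx).1, hside hx⟩
  · exact hR.comp hg fun x hx => ⟨hside hx, (hgm hx).2⟩

theorem lapsLE_comp_two (hL : MonotoneOrAntitoneOn f (Icc 0 c))
    (hR : MonotoneOrAntitoneOn f (Icc c 1)) (huv : u ≤ v) (hgc : ContinuousOn g (Icc u v))
    (hgm : MapsTo g (Icc u v) (Icc 0 1)) (hg : MonotoneOrAntitoneOn g (Icc u v)) :
    LapsLE (f ∘ g) u v 2 := by
  obtain ⟨w, hw, hleft, hright⟩ := hg.exists_mapsTo_Iic_or_Ici (c := c) huv hgc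
  have hl : Icc u w ⊆ Icc u v := Icc_subset_Icc le_rfl hw.2
  have hr : Icc w v ⊆ Icc u v := Icc_subset_Icc hw.1 le_rfl
  exact LapsLE.two_of_le hw.1 hw.2
    ((hg.mono hl).comp_of_mapsTo_Iic_or_Ici hL hR (hgm.mono_left hl) hleft)
    ((hg.mono hr).comp_of_mapsTo_Iic_or_Ici hL hR (hgm.mono_left hr) hright)

theorem lapsLE_comp_comp_two (hfc : ContinuousOn f (Icc 0 1))
    (hfm : MapsTo f (Icc 0 1) (Icc 0 1)) (hL : MonotoneOrAntitoneOn f (Icc 0 c))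
    (hR : MonotoneOrAntitoneOn f (Icc c 1)) (huv : u ≤ v) (hgc : ContinuousOn g (Icc u v))
    (hgm : MapsTo g (Icc u v) (Icc 0 1)) (hg : MonotoneOrAntitoneOn g (Icc u v))
    (hc : c ∉ g '' Icc u v ∨ c ∉ (f ∘ g) '' Icc u v) :
    LapsLE (f ∘ f ∘ g) u v 2 := by
  have hfgc : ContinuousOn (f ∘ g) (Icc u v) := hfc.comp hgc hgm
  have hfgm : MapsTo (f ∘ g) (Icc u v) (Icc 0 1) := hfm.comp hgm
  rcases hc with hc | hc
  · have hfg : MonotoneOrAntitoneOn (f ∘ g) (Icc u v) :=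
      hg.comp_of_mapsTo_Iic_or_Ici hL hR hgm
        (mapsTo_Iic_or_Ici_of_notMem_image isPreconnected_Icc hgc hc)
    exact lapsLE_comp_two hL hR huv hfgc hfgm hfg
  · have piece : ∀ p q, p ≤ q → Icc p q ⊆ Icc u v →
        (MapsTo g (Icc p q) (Iic c) ∨ MapsTo g (Icc p q) (Ici c)) →
        MonotoneOrAntitoneOn (f ∘ f ∘ g) (Icc p q) := by
      intro p q hpq hsub hside
      have hfg : MonotoneOrAntitoneOn (f ∘ g) (Icc p q) :=
        (hg.mono hsub).comp_of_mapsTo_Iic_or_Ici hL hR (hgm.mono_left hsub) hside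
      exact hfg.comp_of_mapsTo_Iic_or_Ici hL hR (hfgm.mono_left hsub)
        (mapsTo_Iic_or_Ici_of_notMem_image isPreconnected_Icc (hfgc.mono hsub)
          fun h => hc (image_mono hsub h))
    obtain ⟨w, hw, hleft, hright⟩ := hg.exists_mapsTo_Iic_or_Ici (c := c) huv hgc
    exact LapsLE.two_of_le hw.1 hw.2 (piece u w hw.1 (Icc_subset_Icc le_rfl hw.2) hleft)
      (piece w v hw.2 (Icc_subset_Icc hw.1 le_rfl) hright)

end Unimodal

namespace PwMono

theorem monotoneOrAntitoneOn_left (F : PwMono 2) : MonotoneOrAntitoneOn F.f (Icc 0 (F.c 1)) := by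
  simpa [MonotoneOrAntitoneOn, F.c0] using
    (F.piece 0 two_pos).imp StrictMonoOn.monotoneOn StrictAntiOn.antitoneOn

theorem monotoneOrAntitoneOn_right (F : PwMono 2) :
    MonotoneOrAntitoneOn F.f (Icc (F.c 1) 1) := by
  simpa [MonotoneOrAntitoneOn, F.cd] using
    (F.piece 1 one_lt_two).imp StrictMonoOn.monotoneOn StrictAntiOn.antitoneOn

variable {a b : ℝ}

theorem lapsLE_iterate_add_two (F : PwMono 2) (ha : 0 ≤ a) (hb : b ≤ 1) {n N : ℕ}
    (hn : ¬ (F.c 1 ∈ F.f^[n] '' Icc a b ∧ F.c 1 ∈ F.f^[n + 1] '' Icc a b))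
    (h : LapsLE F.f^[n] a b N) : LapsLE F.f^[n + 2] a b (2 * N) := by
  refine h.refine fun u v hau huv hvb hlap => ?_
  have huv' : Icc u v ⊆ Icc a b := Icc_subset_Icc hau hvb
  have hI : Icc u v ⊆ Icc 0 1 := huv'.trans (Icc_subset_Icc ha hb)
  rw [Function.iterate_succ', Function.iterate_succ']
  refine lapsLE_comp_comp_two F.cont F.maps F.monotoneOrAntitoneOn_left
    F.monotoneOrAntitoneOn_right huv ((F.cont.iterate F.maps n).mono hI)
    ((F.maps.iterate n).mono_left hI) hlap ?_
  rw [← Function.iterate_succ']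
  exact (not_and_or.mp hn).imp (fun h h' => h (image_mono huv' h'))
    (fun h h' => h (image_mono huv' h'))

theorem lapsLE_iterate (F : PwMono 2) (hab : a ≤ b) (ha : 0 ≤ a) (hb : b ≤ 1)
    (hslow : ∀ k, ¬ (F.c 1 ∈ F.f^[k] '' Icc a b ∧ F.c 1 ∈ F.f^[k + 1] '' Icc a b)) :
    ∀ n, LapsLE F.f^[n] a b (2 ^ ((n + 1) / 2 + 1)) := by
  have hI : Icc a b ⊆ Icc 0 1 := Icc_subset_Icc ha hb
  intro n
  induction n using Nat.twoStepInduction with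
  | zero => exact (lapsLE_one hab (.inl monotoneOn_id)).mono one_le_two
  | one =>
    exact (lapsLE_comp_two (g := id) F.monotoneOrAntitoneOn_left F.monotoneOrAntitoneOn_right
      hab continuousOn_id (mapsTo_id _ |>.mono_right hI) (.inl monotoneOn_id)).mono
      (by norm_num)
  | more n ih _ =>
    have h := F.lapsLE_iterate_add_two ha hb (hslow n) ih
    rwa [← pow_succ', show (n + 1) / 2 + 1 + 1 = (n + 2 + 1) / 2 + 1 by omega] at h

end PwMono

theorem two_pow_ceil_half_add_one_le (n : ℕ) :
    (2 : ℝ) ^ ((n + 1) / 2 + 1) ≤ 4 * 2 ^ ((n : ℝ) / 2) := by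
  have hexp : (((n + 1) / 2 + 1 : ℕ) : ℝ) ≤ (n : ℝ) / 2 + 2 := by
    have : ((n + 1) / 2 + 1) * 2 ≤ n + 4 := by omega
    have := (Nat.cast_le (α := ℝ)).2 this
    push_cast at this ⊢
    linarith
  calc (2 : ℝ) ^ ((n + 1) / 2 + 1) = 2 ^ (((n + 1) / 2 + 1 : ℕ) : ℝ) := (Real.rpow_natCast _ _).symm
    _ ≤ 2 ^ ((n : ℝ) / 2 + 2) := Real.rpow_le_rpow_of_exponent_le one_le_two hexp
    _ = 4 * 2 ^ ((n : ℝ) / 2) := by rw [Real.rpow_add two_pos, Real.rpow_two]; ring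

/-- for a slow interval `J` of a unimodal map, `ℓ(fⁿ, J) ≤ 2^{⌈n/2⌉+1}`
for all `n ≥ 1`, hence `Var_J(fⁿ) ≤ C·2^{n/2}` with `C` independent of `n`. -/
theorem stmt_12 (F : PwMono 2) (a b : ℝ) (hab : a ≤ b) (ha : 0 ≤ a) (hb : b ≤ 1)
    -- J = [a,b] is slow: there is no k with c ∈ f^k(J) and c ∈ f^{k+1}(J)
    (hslow : ¬ ∃ k : ℕ, F.c 1 ∈ F.f^[k] '' Set.Icc a b ∧ F.c 1 ∈ F.f^[k + 1] '' Set.Icc a b) :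
    (∀ n : ℕ, 1 ≤ n → LapsLE (F.f^[n]) a b (2 ^ ((n + 1) / 2 + 1))) ∧
    ∃ C : ℝ, ∀ n : ℕ, 1 ≤ n →
      (eVariationOn (F.f^[n]) (Set.Icc a b)).toReal ≤ C * (2 : ℝ) ^ ((n : ℝ) / 2) := by
  have laps := F.lapsLE_iterate hab ha hb (not_exists.mp hslow)
  refine ⟨fun n _ => laps n, 4, fun n _ => ?_⟩
  have hvar := (laps n).eVariationOn_le ((F.maps.iterate n).mono_left (Icc_subset_Icc ha hb))
  calc (eVariationOn F.f^[n] (Icc a b)).toReal ≤ (2 : ℝ) ^ ((n + 1) / 2 + 1) := by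
        simpa using ENNReal.toReal_mono (by simp) hvar
    _ ≤ 4 * 2 ^ ((n : ℝ) / 2) := two_pow_ceil_half_add_one_le n
end

section
/- If g is a piecewise linear unimodal map of constant slope λ > √2, then g has no slow intervals; that is, every nondegenerate closed subinterval J of the core eventually satisfies that both g^k(J) and g^{k+1}(J) contain the turning point for some k. Consequently g is locally eventually onto its core. -/
open Set

/-! After the normalisation forced by the hypotheses, `g` is the tent map `x ↦ λ min(x, 1 - x)`
with turning point `1/2`. A tent map stretches an interval by `λ`, or by at least `λ/2` if the
interval contains the turning point. If `J` is slow, no two consecutive images of `J` contain the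
turning point, so `g²` stretches every `g^{2n}(J)` by at least `λ²/2 > 1`, which is impossible
inside `[0,1]`. Once `g^k(J)` and `g^{k+1}(J)` both contain `c`, the connected set `g^{k+1}(J)`
contains `[c, g(c)]`, whose image is the whole core `[g²(c), g(c)]`. -/

variable {α : Type*}

def IsSlow (f : α → α) (c : α) (J : Set α) : Prop :=
  ∀ k, ¬ (c ∈ f^[k] '' J ∧ c ∈ f^[k + 1] '' J)

lemma IsSlow.image_iterate {f : α → α} {c : α} {J : Set α} (h : IsSlow f c J) (n : ℕ) :
    IsSlow f c (f^[n] '' J) := by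
  intro k
  simp only [image_image, ← Function.iterate_add_apply, Nat.add_right_comm k 1 n]
  exact h (k + n)

lemma image_iterate_eq_of_eqOn {f g : α → α} {s J : Set α} (hfg : EqOn f g s)
    (hf : MapsTo f s s) (hJ : J ⊆ s) (n : ℕ) : f^[n] '' J = g^[n] '' J := by
  refine image_congr fun x hx => ?_
  induction n with
  | zero => rfl
  | succ n ih =>
    rw [Function.iterate_succ_apply', Function.iterate_succ_apply', ← ih,
      hfg (hf.iterate n (hJ hx))]

lemma iterate_image_eq_of_mem_of_mem [LinearOrder α] [TopologicalSpace α] [OrderClosedTopology α]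
    {f : α → α} {c : α} {J K : Set α} (hf : Continuous f)
    (hK : MapsTo f K K) (hcover : K ⊆ f '' Icc c (f c)) (hJK : J ⊆ K) (hJ : IsPreconnected J)
    {k : ℕ} (hk : c ∈ f^[k] '' J ∧ c ∈ f^[k + 1] '' J) : f^[k + 2] '' J = K := by
  refine (image_mono hJK |>.trans (hK.iterate (k + 2)).image_subset).antisymm ?_
  have hfc : f c ∈ f^[k + 1] '' J := by
    rw [Function.iterate_succ', image_comp]
    exact mem_image_of_mem f hk.1
  have hconn : IsPreconnected (f^[k + 1] '' J) :=
    hJ.image _ ((hf.iterate (k + 1)).continuousOn)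
  calc K ⊆ f '' Icc c (f c) := hcover
    _ ⊆ f '' (f^[k + 1] '' J) := image_mono (hconn.Icc_subset hk.2 hfc)
    _ = f^[k + 2] '' J := by rw [← image_comp, ← Function.iterate_succ']

noncomputable def tent (lam : ℝ) (x : ℝ) : ℝ := lam * min x (1 - x)

namespace tent

variable {lam u v : ℝ}

lemma continuous (lam : ℝ) : Continuous (tent lam) := by
  unfold tent; fun_prop

lemma apply_half (lam : ℝ) : tent lam (1 / 2) = lam / 2 := by
  norm_num [tent]; ring

lemma apply_of_le_half {x : ℝ} (hx : x ≤ 1 / 2) : tent lam x = lam * x := by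
  rw [tent, min_eq_left (by linarith)]

lemma apply_of_half_le {x : ℝ} (hx : 1 / 2 ≤ x) : tent lam x = lam * (1 - x) := by
  rw [tent, min_eq_right (by linarith)]

lemma image_Icc_of_le_half (hl : 0 ≤ lam) (huv : u ≤ v) (hv : v ≤ 1 / 2) :
    tent lam '' Icc u v = Icc (lam * u) (lam * v) := by
  have heq : EqOn (tent lam) (lam * ·) (Icc u v) := fun x hx => apply_of_le_half (hx.2.trans hv)
  rw [image_congr heq, image_mul_left_Icc hl huv]

lemma image_Icc_of_half_le (hl : 0 ≤ lam) (huv : u ≤ v) (hu : 1 / 2 ≤ u) :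
    tent lam '' Icc u v = Icc (lam * (1 - v)) (lam * (1 - u)) := by
  have heq : EqOn (tent lam) ((lam * ·) ∘ (1 - ·)) (Icc u v) := fun x hx =>
    apply_of_half_le (hu.trans hx.1)
  rw [image_congr heq, image_comp, image_const_sub_Icc, image_mul_left_Icc hl (by linarith)]

lemma image_Icc_of_mem (hl : 0 ≤ lam) (hu : u ≤ 1 / 2) (hv : 1 / 2 ≤ v) :
    tent lam '' Icc u v = Icc (min (lam * u) (lam * (1 - v))) (lam / 2) := by
  have hlu : lam * u ≤ lam / 2 := by nlinarith
  have hlv : lam * (1 - v) ≤ lam / 2 := by nlinarith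
  rw [← Icc_union_Icc_eq_Icc hu hv, image_union, image_Icc_of_le_half hl hu le_rfl,
    image_Icc_of_half_le hl hv le_rfl, show lam * (1 / 2) = lam / 2 by ring,
    show lam * (1 - 1 / 2) = lam / 2 by ring, Icc_union_Icc' hlv hlu, max_self]

lemma image_Icc (hl0 : 0 ≤ lam) (hl2 : lam ≤ 2) (hu : 0 ≤ u) (huv : u ≤ v) (hv : v ≤ 1) :
    ∃ p q, tent lam '' Icc u v = Icc p q ∧ 0 ≤ p ∧ p ≤ q ∧ q ≤ 1 ∧
      lam / 2 * (v - u) ≤ q - p ∧ ((1 / 2 : ℝ) ∉ Icc u v → q - p = lam * (v - u)) := by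
  rcases le_or_gt v (1 / 2) with hv2 | hv2
  · refine ⟨_, _, image_Icc_of_le_half hl0 huv hv2, by positivity, by nlinarith, by nlinarith,
      by nlinarith, fun _ => by ring⟩
  rcases le_or_gt u (1 / 2) with hu2 | hu2
  · refine ⟨_, _, image_Icc_of_mem hl0 hu2 hv2.le, le_min (by positivity) (by nlinarith),
      min_le_left _ _ |>.trans (by nlinarith), by linarith, ?_, fun h => absurd ⟨hu2, hv2.le⟩ h⟩
    linarith [min_le_left (lam * u) (lam * (1 - v)), min_le_right (lam * u) (lam * (1 - v))]
  · refine ⟨_, _, image_Icc_of_half_le hl0 huv hu2.le, by nlinarith, by nlinarith, by nlinarith,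
      by nlinarith, fun _ => by ring⟩

lemma image_iterate_two_of_isSlow (hl0 : 0 ≤ lam) (hl2 : lam ≤ 2) (hu : 0 ≤ u) (huv : u ≤ v)
    (hv : v ≤ 1) (hslow : IsSlow (tent lam) (1 / 2) (Icc u v)) :
    ∃ p q, (tent lam)^[2] '' Icc u v = Icc p q ∧ 0 ≤ p ∧ p ≤ q ∧ q ≤ 1 ∧
      lam ^ 2 / 2 * (v - u) ≤ q - p := by
  obtain ⟨p₁, q₁, himg₁, hp₁, hpq₁, hq₁, hlen₁, hexact₁⟩ := image_Icc hl0 hl2 hu huv hv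
  obtain ⟨p₂, q₂, himg₂, hp₂, hpq₂, hq₂, hlen₂, hexact₂⟩ := image_Icc hl0 hl2 hp₁ hpq₁ hq₁
  have himg : (tent lam)^[2] '' Icc u v = Icc p₂ q₂ := by
    rw [show (tent lam)^[2] = tent lam ∘ tent lam from rfl, image_comp, himg₁, himg₂]
  refine ⟨p₂, q₂, himg, hp₂, hpq₂, hq₂, ?_⟩
  by_cases hmem : (1 / 2 : ℝ) ∈ Icc u v
  · have hnot : (1 / 2 : ℝ) ∉ Icc p₁ q₁ := fun h => hslow 0
      ⟨by rwa [Function.iterate_zero, image_id], by rwa [zero_add, Function.iterate_one, himg₁]⟩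
    nlinarith [hexact₂ hnot]
  · nlinarith [hexact₁ hmem]

lemma image_iterate_two_mul_of_isSlow (hl0 : 0 ≤ lam) (hl2 : lam ≤ 2) (hu : 0 ≤ u)
    (huv : u ≤ v) (hv : v ≤ 1) (hslow : IsSlow (tent lam) (1 / 2) (Icc u v)) (n : ℕ) :
    ∃ p q, (tent lam)^[2 * n] '' Icc u v = Icc p q ∧ 0 ≤ p ∧ p ≤ q ∧ q ≤ 1 ∧
      (lam ^ 2 / 2) ^ n * (v - u) ≤ q - p := by
  induction n with
  | zero => exact ⟨u, v, by simp, hu, huv, hv, by simp⟩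
  | succ n ih =>
    obtain ⟨p, q, himg, hp, hpq, hq, hlen⟩ := ih
    obtain ⟨p', q', himg', hp', hpq', hq', hlen'⟩ :=
      image_iterate_two_of_isSlow hl0 hl2 hp hpq hq (himg ▸ hslow.image_iterate (2 * n))
    refine ⟨p', q', ?_, hp', hpq', hq', ?_⟩
    · rw [mul_add_one, add_comm, Function.iterate_add, image_comp, himg, himg']
    · calc (lam ^ 2 / 2) ^ (n + 1) * (v - u) = lam ^ 2 / 2 * ((lam ^ 2 / 2) ^ n * (v - u)) := by
            ring
        _ ≤ lam ^ 2 / 2 * (q - p) := by gcongr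
        _ ≤ q' - p' := hlen'

theorem not_isSlow (hlam : √2 < lam) (hl2 : lam ≤ 2) (hu : 0 ≤ u) (huv : u < v) (hv : v ≤ 1) :
    ¬ IsSlow (tent lam) (1 / 2) (Icc u v) := by
  intro hslow
  have hgrowth : 1 < lam ^ 2 / 2 := by linarith [Real.lt_sq_of_sqrt_lt hlam]
  obtain ⟨n, hn⟩ := pow_unbounded_of_one_lt (1 / (v - u)) hgrowth
  obtain ⟨p, q, -, hp, -, hq, hlen⟩ :=
    image_iterate_two_mul_of_isSlow ((Real.sqrt_nonneg 2).trans hlam.le) hl2 hu huv.le hv hslow n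
  rw [div_lt_iff₀ (sub_pos.mpr huv)] at hn
  linarith

lemma mapsTo_core (hl1 : 1 ≤ lam) (hl2 : lam ≤ 2) :
    MapsTo (tent lam) (Icc (lam - lam ^ 2 / 2) (lam / 2)) (Icc (lam - lam ^ 2 / 2) (lam / 2)) := by
  intro x ⟨hx₁, hx₂⟩
  rcases min_choice x (1 - x) with h | h <;>
    · simp only [tent, h, mem_Icc]
      constructor <;> nlinarith [min_le_left x (1 - x), min_le_right x (1 - x)]

lemma core_subset_image (hl1 : 1 ≤ lam) :
    Icc (lam - lam ^ 2 / 2) (lam / 2) ⊆ tent lam '' Icc (1 / 2) (tent lam (1 / 2)) := by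
  rw [apply_half, image_Icc_of_half_le (by linarith) (by linarith) le_rfl]
  exact Icc_subset_Icc (by linarith) (by linarith)

lemma core_subset_Icc (hl0 : 0 ≤ lam) (hl2 : lam ≤ 2) :
    Icc (lam - lam ^ 2 / 2) (lam / 2) ⊆ Icc 0 1 :=
  Icc_subset_Icc (by nlinarith) (by linarith)

theorem exists_mem_iterate_image_and_succ (hlam : √2 < lam) (hl2 : lam ≤ 2) {a b : ℝ}
    (hab : a < b) (hsub : Icc a b ⊆ Icc (lam - lam ^ 2 / 2) (lam / 2)) :
    ∃ k, (1 / 2 : ℝ) ∈ (tent lam)^[k] '' Icc a b ∧ (1 / 2 : ℝ) ∈ (tent lam)^[k + 1] '' Icc a b := by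
  have hab01 := hsub.trans (core_subset_Icc (Real.sqrt_nonneg 2 |>.trans hlam.le) hl2)
  exact not_forall_not.mp <|
    not_isSlow hlam hl2 (hab01 ⟨le_rfl, hab.le⟩).1 hab (hab01 ⟨hab.le, le_rfl⟩).2

theorem exists_iterate_image_eq_core (hlam : √2 < lam) (hl2 : lam ≤ 2) {a b : ℝ} (hab : a < b)
    (hsub : Icc a b ⊆ Icc (lam - lam ^ 2 / 2) (lam / 2)) :
    ∃ n, (tent lam)^[n] '' Icc a b = Icc (lam - lam ^ 2 / 2) (lam / 2) := by
  have hl1 : 1 ≤ lam := (Real.one_lt_sqrt_two.trans hlam).le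
  obtain ⟨k, hk⟩ := exists_mem_iterate_image_and_succ hlam hl2 hab hsub
  exact ⟨k + 2, iterate_image_eq_of_mem_of_mem (continuous lam) (mapsTo_core hl1 hl2)
    (core_subset_image hl1) hsub isPreconnected_Icc hk⟩

end tent

namespace PwMono

def HasConstSlope {d : ℕ} (G : PwMono d) (lam : ℝ) : Prop :=
  ∀ k < d, ∀ x ∈ Icc (G.c k) (G.c (k + 1)),
    ∀ y ∈ Icc (G.c k) (G.c (k + 1)), |G.f x - G.f y| = lam * |x - y|

variable (G : PwMono 2) {lam : ℝ}

lemma c_one_pos : 0 < G.c 1 := G.c0 ▸ G.cmono (by simp) (by simp) zero_lt_one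

lemma c_one_lt_one : G.c 1 < 1 := G.cd ▸ G.cmono (by simp) (by simp) one_lt_two

lemma apply_of_le_c_one (hslope : G.HasConstSlope lam)
    (h0 : G.f 0 = 0) {x : ℝ} (hx : x ∈ Icc 0 (G.c 1)) : G.f x = lam * x := by
  have hzero : (0 : ℝ) ∈ Icc (G.c 0) (G.c 1) := ⟨G.c0.le, G.c_one_pos.le⟩
  have h := hslope 0 zero_lt_two x (G.c0 ▸ hx) 0 hzero
  rwa [h0, sub_zero, sub_zero, abs_of_nonneg (G.maps ⟨hx.1, hx.2.trans G.c_one_lt_one.le⟩).1,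
    abs_of_nonneg hx.1] at h

lemma apply_of_c_one_le (hslope : G.HasConstSlope lam)
    (h1 : G.f 1 = 0) {x : ℝ} (hx : x ∈ Icc (G.c 1) 1) : G.f x = lam * (1 - x) := by
  have hone : (1 : ℝ) ∈ Icc (G.c 1) (G.c 2) := ⟨G.c_one_lt_one.le, G.cd.ge⟩
  have h := hslope 1 one_lt_two x (G.cd ▸ hx) 1 hone
  rwa [h1, sub_zero, abs_of_nonneg (G.maps ⟨G.c_one_pos.le.trans hx.1, hx.2⟩).1,
    abs_sub_comm, abs_of_nonneg (sub_nonneg.mpr hx.2)] at h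

lemma c_one_eq_half (hlam : lam ≠ 0) (hslope : G.HasConstSlope lam)
    (h0 : G.f 0 = 0) (h1 : G.f 1 = 0) : G.c 1 = 1 / 2 := by
  have h := (G.apply_of_le_c_one hslope h0 ⟨G.c_one_pos.le, le_rfl⟩).symm.trans
    (G.apply_of_c_one_le hslope h1 ⟨le_rfl, G.c_one_lt_one.le⟩)
  linarith [mul_left_cancel₀ hlam h]

lemma eqOn_tent (hlam : lam ≠ 0) (hslope : G.HasConstSlope lam)
    (h0 : G.f 0 = 0) (h1 : G.f 1 = 0) : EqOn G.f (tent lam) (Icc 0 1) := by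
  have hc := G.c_one_eq_half hlam hslope h0 h1
  intro x ⟨hx₀, hx₁⟩
  rcases le_total x (1 / 2) with hx | hx
  · rw [G.apply_of_le_c_one hslope h0 ⟨hx₀, hc ▸ hx⟩, tent.apply_of_le_half hx]
  · rw [G.apply_of_c_one_le hslope h1 ⟨hc ▸ hx, hx₁⟩, tent.apply_of_half_le hx]

lemma le_two_of_eqOn_tent (hfT : EqOn G.f (tent lam) (Icc 0 1)) : lam ≤ 2 := by
  have hhalf : (1 / 2 : ℝ) ∈ Icc 0 1 := by norm_num
  have := (G.maps hhalf).2
  rw [hfT hhalf, tent.apply_half] at this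
  linarith

end PwMono

theorem stmt_14_general (G : PwMono 2) (lam : ℝ) (hlam : Real.sqrt 2 < lam)
    -- g is piecewise linear of constant slope ±λ
    (hslope : ∀ k < 2, ∀ x ∈ Set.Icc (G.c k) (G.c (k + 1)),
      ∀ y ∈ Set.Icc (G.c k) (G.c (k + 1)), |G.f x - G.f y| = lam * |x - y|)
    -- normalization: g(0) = g(1) = 0
    (h0 : G.f 0 = 0) (h1 : G.f 1 = 0) :
    (∀ a b : ℝ, a < b →
      Set.Icc a b ⊆ Set.Icc (G.f (G.f (G.c 1))) (G.f (G.c 1)) →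
      ∃ k : ℕ, G.c 1 ∈ G.f^[k] '' Set.Icc a b ∧ G.c 1 ∈ G.f^[k + 1] '' Set.Icc a b) ∧
    ∀ a b : ℝ, a < b →
      Set.Icc a b ⊆ Set.Icc (G.f (G.f (G.c 1))) (G.f (G.c 1)) →
      ∃ n : ℕ, G.f^[n] '' Set.Icc a b = Set.Icc (G.f (G.f (G.c 1))) (G.f (G.c 1)) := by
  have hl1 : 1 ≤ lam := (Real.one_lt_sqrt_two.trans hlam).le
  have hc := G.c_one_eq_half (by positivity) hslope h0 h1
  have hfT := G.eqOn_tent (by positivity) hslope h0 h1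
  have hl2 : lam ≤ 2 := G.le_two_of_eqOn_tent hfT
  have hfc : G.f (G.c 1) = lam / 2 := by rw [hc, hfT (by norm_num), tent.apply_half]
  have hffc : G.f (G.f (G.c 1)) = lam - lam ^ 2 / 2 := by
    rw [hfc, hfT ⟨by positivity, by linarith⟩, tent.apply_of_half_le (by linarith)]
    ring
  rw [hffc, hfc, hc]
  have himg {a b : ℝ} (hsub : Icc a b ⊆ Icc (lam - lam ^ 2 / 2) (lam / 2)) (n : ℕ) :
      G.f^[n] '' Icc a b = (tent lam)^[n] '' Icc a b :=
    image_iterate_eq_of_eqOn hfT G.maps (hsub.trans (tent.core_subset_Icc (by positivity) hl2)) n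
  refine ⟨fun a b hab hsub => ?_, fun a b hab hsub => ?_⟩
  · simp only [himg hsub]
    exact tent.exists_mem_iterate_image_and_succ hlam hl2 hab hsub
  · simp only [himg hsub]
    exact tent.exists_iterate_image_eq_core hlam hl2 hab hsub

/-- a piecewise linear unimodal map of constant slope `λ > √2` has no
slow intervals, and is locally eventually onto its core. -/
theorem stmt_14 (G : PwMono 2) (lam : ℝ) (hlam : Real.sqrt 2 < lam)
    -- g is piecewise linear of constant slope ±λ
    (hslope : ∀ k < 2, ∀ x ∈ Set.Icc (G.c k) (G.c (k + 1)),
      ∀ y ∈ Set.Icc (G.c k) (G.c (k + 1)), |G.f x - G.f y| = lam * |x - y|)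
    -- normalization: g(0) = g(1) = 0, g increasing on [0,c], decreasing on [c,1]
    (h0 : G.f 0 = 0) (h1 : G.f 1 = 0)
    (hup : StrictMonoOn G.f (Set.Icc (G.c 0) (G.c 1)))
    (hdown : StrictAntiOn G.f (Set.Icc (G.c 1) (G.c 2))) :
    (∀ a b : ℝ, a < b →
      Set.Icc a b ⊆ Set.Icc (G.f (G.f (G.c 1))) (G.f (G.c 1)) →
      ∃ k : ℕ, G.c 1 ∈ G.f^[k] '' Set.Icc a b ∧ G.c 1 ∈ G.f^[k + 1] '' Set.Icc a b) ∧
    ∀ a b : ℝ, a < b →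
      Set.Icc a b ⊆ Set.Icc (G.f (G.f (G.c 1))) (G.f (G.c 1)) →
      ∃ n : ℕ, G.f^[n] '' Set.Icc a b = Set.Icc (G.f (G.f (G.c 1))) (G.f (G.c 1)) :=
  stmt_14_general G lam hlam hslope h0 h1
end

section
/- If J₁ and J₂ are slow intervals for a unimodal map f with nonempty intersection, then J₁ ∪ J₂ is also a slow interval. -/
open Set

open Filter

open Topology
open scoped ENNReal

/-!
A slow interval `J` never contains the turning point `c` at two consecutive times, so along the
orbit `J, f J, f² J, …` the variation of the iterates can double at most every other step:
`Var_J (fⁿ) ≤ 2 ^ ((n + 1) / 2)`. Two overlapping intervals cover their union with two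
subintervals, one inside each of them, so a union of two overlapping slow intervals still has
`Var (fⁿ) = O(√2 ⁿ) = o(λⁿ)`, and the characterization of fast intervals shows that it is slow.
-/

lemma Set.OrdConnected.subset_Iic_or_subset_Ici {α : Type*} [LinearOrder α] {s : Set α}
    (hs : s.OrdConnected) {c : α} (hc : c ∉ s) : s ⊆ Iic c ∨ s ⊆ Ici c := by
  by_contra h
  simp only [not_or, Set.not_subset, mem_Iic, mem_Ici, not_le] at h
  obtain ⟨⟨x, hx, hcx⟩, ⟨y, hy, hyc⟩⟩ := h
  exact hc (hs.out hy hx ⟨hyc.le, hcx.le⟩)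

section eVariationOn

variable {α E : Type*} [LinearOrder α] [PseudoEMetricSpace E]

lemma eVariationOn_comp_le_of_monotoneOn_or_antitoneOn {β : Type*} [LinearOrder β]
    (g : α → E) {φ : β → α} {t : Set β} (hφ : MonotoneOn φ t ∨ AntitoneOn φ t) :
    eVariationOn (g ∘ φ) t ≤ eVariationOn g (φ '' t) :=
  hφ.elim (fun h ↦ eVariationOn.comp_le_of_monotoneOn g φ h (mapsTo_image φ t))
    (fun h ↦ eVariationOn.comp_le_of_antitoneOn g φ h (mapsTo_image φ t))

lemma eVariationOn_Icc_min_max_le {f : α → E} {a₁ b₁ a₂ b₂ t : α} {B : ℝ≥0∞}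
    (ht₁ : t ∈ Icc a₁ b₁) (ht₂ : t ∈ Icc a₂ b₂)
    (h₁ : eVariationOn f (Icc a₁ b₁) ≤ B) (h₂ : eVariationOn f (Icc a₂ b₂) ≤ B) :
    eVariationOn f (Icc (min a₁ a₂) (max b₁ b₂)) ≤ 2 * B := by
  have hB : ∀ {u : Set α}, u ⊆ Icc a₁ b₁ ∨ u ⊆ Icc a₂ b₂ → eVariationOn f u ≤ B := by
    rintro u (hu | hu)
    exacts [(eVariationOn.mono f hu).trans h₁, (eVariationOn.mono f hu).trans h₂]
  have hmt : min a₁ a₂ ≤ t := min_le_of_left_le ht₁.1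
  have htM : t ≤ max b₁ b₂ := le_max_of_le_left ht₁.2
  rw [← Icc_union_Icc_eq_Icc hmt htM,
    eVariationOn.union f (isGreatest_Icc hmt) (isLeast_Icc htM), two_mul]
  refine add_le_add (hB ?_) (hB ?_)
  · rcases min_choice a₁ a₂ with h | h <;> rw [h]
    exacts [Or.inl (Icc_subset_Icc_right ht₁.2), Or.inr (Icc_subset_Icc_right ht₂.2)]
  · rcases max_choice b₁ b₂ with h | h <;> rw [h]
    exacts [Or.inl (Icc_subset_Icc_left ht₁.1), Or.inr (Icc_subset_Icc_left ht₂.1)]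

end eVariationOn

lemma eVariationOn_id_le_one {s : Set ℝ} (hs : s ⊆ Icc 0 1) : eVariationOn id s ≤ 1 := by
  have h := (monotoneOn_id (s := Icc (0 : ℝ) 1)).eVariationOn_eq
    (left_mem_Icc.mpr zero_le_one) (right_mem_Icc.mpr zero_le_one)
  rw [inter_self] at h
  exact (eVariationOn.mono id hs).trans (by simp [h])

lemma tendsto_toReal_div_pow_of_le_two_pow_half {u : ℕ → ℝ≥0∞} {C : ℝ≥0∞} {lam : ℝ}
    (hlam : √2 < lam) (hC : C ≠ ∞) (hu : ∀ n, u n ≤ C * 2 ^ ((n + 1) / 2)) :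
    Tendsto (fun n ↦ (u n).toReal / lam ^ n) atTop (𝓝 0) := by
  have hlam0 : 0 < lam := (Real.sqrt_nonneg 2).trans_lt hlam
  have hpow (n : ℕ) : (2 : ℝ) ^ ((n + 1) / 2) ≤ √2 * √2 ^ n :=
    calc (2 : ℝ) ^ ((n + 1) / 2) = (√2 ^ 2) ^ ((n + 1) / 2) := by rw [Real.sq_sqrt zero_le_two]
      _ = √2 ^ (2 * ((n + 1) / 2)) := (pow_mul _ _ _).symm
      _ ≤ √2 ^ (n + 1) := pow_le_pow_right₀ (Real.one_le_sqrt.mpr one_le_two) (by omega)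
      _ = √2 * √2 ^ n := pow_succ' _ _
  have hbound (n : ℕ) : (u n).toReal / lam ^ n ≤ C.toReal * √2 * (√2 / lam) ^ n :=
    calc (u n).toReal / lam ^ n ≤ C.toReal * 2 ^ ((n + 1) / 2) / lam ^ n := by
          gcongr
          simpa using ENNReal.toReal_mono (by finiteness) (hu n)
      _ ≤ C.toReal * (√2 * √2 ^ n) / lam ^ n := by gcongr; exact hpow n
      _ = C.toReal * √2 * (√2 / lam) ^ n := by rw [div_pow]; ring
  have hgeom := (tendsto_pow_atTop_nhds_zero_of_lt_one (by positivity)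
    ((div_lt_one hlam0).mpr hlam)).const_mul (C.toReal * √2)
  rw [mul_zero] at hgeom
  exact squeeze_zero (fun n ↦ by positivity) hbound hgeom

namespace PwMono

variable (F : PwMono 2)

lemma monotoneOn_or_antitoneOn_of_subset {s : Set ℝ} (hs : s ⊆ Icc 0 1)
    (hc : s ⊆ Iic (F.c 1) ∨ s ⊆ Ici (F.c 1)) : MonotoneOn F.f s ∨ AntitoneOn F.f s := by
  rcases hc with hc | hc
  · have hsub : s ⊆ Icc (F.c 0) (F.c 1) := fun x hx ↦ ⟨F.c0 ▸ (hs hx).1, hc hx⟩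
    exact (F.piece 0 two_pos).imp (fun h ↦ (h.mono hsub).monotoneOn)
      (fun h ↦ (h.mono hsub).antitoneOn)
  · have hsub : s ⊆ Icc (F.c 1) (F.c (1 + 1)) := fun x hx ↦ ⟨hc hx, F.cd ▸ (hs hx).2⟩
    exact (F.piece 1 one_lt_two).imp (fun h ↦ (h.mono hsub).monotoneOn)
      (fun h ↦ (h.mono hsub).antitoneOn)

variable {F}

lemma ordConnected_image {s : Set ℝ} (hs : s.OrdConnected) (hs₁ : s ⊆ Icc 0 1) :
    (F.f '' s).OrdConnected :=
  (hs.isPreconnected.image F.f (F.cont.mono hs₁)).ordConnected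

lemma image_subset_Icc {s : Set ℝ} (hs₁ : s ⊆ Icc 0 1) : F.f '' s ⊆ Icc 0 1 :=
  (F.maps.mono_left hs₁).image_subset

lemma eVariationOn_comp_le_of_notMem (g : ℝ → ℝ) {s : Set ℝ} (hs : s.OrdConnected)
    (hs₁ : s ⊆ Icc 0 1) (hc : F.c 1 ∉ s) :
    eVariationOn (g ∘ F.f) s ≤ eVariationOn g (F.f '' s) :=
  eVariationOn_comp_le_of_monotoneOn_or_antitoneOn g
    (F.monotoneOn_or_antitoneOn_of_subset hs₁ (hs.subset_Iic_or_subset_Ici hc))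

lemma eVariationOn_comp_le_two_mul (g : ℝ → ℝ) {s : Set ℝ} (hs : s.OrdConnected)
    (hs₁ : s ⊆ Icc 0 1) : eVariationOn (g ∘ F.f) s ≤ 2 * eVariationOn g (F.f '' s) := by
  by_cases hc : F.c 1 ∈ s
  · have hlap {t : Set ℝ} (ht : t ⊆ Iic (F.c 1) ∨ t ⊆ Ici (F.c 1)) (hts : t ⊆ s) :
        eVariationOn (g ∘ F.f) t ≤ eVariationOn g (F.f '' s) :=
      (eVariationOn_comp_le_of_monotoneOn_or_antitoneOn g
        (F.monotoneOn_or_antitoneOn_of_subset (hts.trans hs₁) ht)).trans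
        (eVariationOn.mono g (image_mono hts))
    have hgreatest : IsGreatest (s ∩ Iic (F.c 1)) (F.c 1) := ⟨⟨hc, self_mem_Iic⟩, fun _ hx ↦ hx.2⟩
    have hleast : IsLeast (s ∩ Ici (F.c 1)) (F.c 1) := ⟨⟨hc, self_mem_Ici⟩, fun _ hx ↦ hx.2⟩
    calc eVariationOn (g ∘ F.f) s
        = eVariationOn (g ∘ F.f) (s ∩ Iic (F.c 1)) + eVariationOn (g ∘ F.f) (s ∩ Ici (F.c 1)) := by
          rw [← eVariationOn.union _ hgreatest hleast, ← inter_union_distrib_left, Iic_union_Ici,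
            inter_univ]
      _ ≤ eVariationOn g (F.f '' s) + eVariationOn g (F.f '' s) :=
          add_le_add (hlap (Or.inl inter_subset_right) inter_subset_left)
            (hlap (Or.inr inter_subset_right) inter_subset_left)
      _ = 2 * eVariationOn g (F.f '' s) := (two_mul _).symm
  · rw [two_mul]
    exact (eVariationOn_comp_le_of_notMem g hs hs₁ hc).trans le_add_self

variable (F) in
def IsSlow (s : Set ℝ) : Prop :=
  ¬ ∃ k : ℕ, F.c 1 ∈ F.f^[k] '' s ∧ F.c 1 ∈ F.f^[k + 1] '' s

lemma IsSlow.image {s : Set ℝ} (h : F.IsSlow s) : F.IsSlow (F.f '' s) := by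
  rintro ⟨k, hk, hk'⟩
  refine h ⟨k + 1, ?_, ?_⟩ <;> rwa [Function.iterate_succ, image_comp]

lemma IsSlow.notMem_image {s : Set ℝ} (h : F.IsSlow s) (hc : F.c 1 ∈ s) :
    F.c 1 ∉ F.f '' s :=
  fun hc' ↦ h ⟨0, by simpa using hc, by simpa using hc'⟩

/-- A step that splits `s` at `c` is followed by one that does not split: the second bound, for
slow sets avoiding `c`, carries this through the induction. -/
lemma IsSlow.eVariationOn_iterate_le (n : ℕ) {s : Set ℝ} (h : F.IsSlow s)
    (hs : s.OrdConnected) (hs₁ : s ⊆ Icc 0 1) :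
    eVariationOn F.f^[n] s ≤ 2 ^ ((n + 1) / 2) ∧
      (F.c 1 ∉ s → eVariationOn F.f^[n] s ≤ 2 ^ (n / 2)) := by
  induction n generalizing s with
  | zero =>
    have h₀ : eVariationOn F.f^[0] s ≤ 1 := eVariationOn_id_le_one hs₁
    exact ⟨h₀, fun _ ↦ h₀⟩
  | succ n ih =>
    obtain ⟨ih₁, ih₂⟩ := ih h.image (ordConnected_image hs hs₁) (image_subset_Icc hs₁)
    rw [Function.iterate_succ]
    by_cases hc : F.c 1 ∈ s
    · refine ⟨?_, absurd hc⟩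
      calc eVariationOn (F.f^[n] ∘ F.f) s ≤ 2 * eVariationOn F.f^[n] (F.f '' s) :=
            eVariationOn_comp_le_two_mul _ hs hs₁
        _ ≤ 2 * 2 ^ (n / 2) := by gcongr; exact ih₂ (h.notMem_image hc)
        _ = 2 ^ ((n + 1 + 1) / 2) := by rw [← pow_succ']; congr 1; omega
    · have h' := (eVariationOn_comp_le_of_notMem _ hs hs₁ hc).trans ih₁
      exact ⟨h'.trans (pow_le_pow_right₀ one_le_two (by omega)), fun _ ↦ h'⟩

end PwMono

open PwMono

theorem stmt_15_general (F : PwMono 2) (lam : ℝ) (hlam : Real.sqrt 2 < lam)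
    -- the characterization of fast intervals via the growth of variation
    (hchar : ∀ a b : ℝ, 0 ≤ a → a ≤ b → b ≤ 1 →
      ((∃ k : ℕ, F.c 1 ∈ F.f^[k] '' Set.Icc a b ∧ F.c 1 ∈ F.f^[k + 1] '' Set.Icc a b) ↔
        0 < atTop.liminf fun n : ℕ => (eVariationOn (F.f^[n]) (Set.Icc a b)).toReal / lam ^ n))
    (a₁ b₁ a₂ b₂ : ℝ) (h₁ : 0 ≤ a₁) (h₁'' : b₁ ≤ 1)
    (h₂ : 0 ≤ a₂) (h₂'' : b₂ ≤ 1)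
    (hmeet : (Set.Icc a₁ b₁ ∩ Set.Icc a₂ b₂).Nonempty)
    (hslow₁ : ¬ ∃ k : ℕ, F.c 1 ∈ F.f^[k] '' Set.Icc a₁ b₁ ∧
      F.c 1 ∈ F.f^[k + 1] '' Set.Icc a₁ b₁)
    (hslow₂ : ¬ ∃ k : ℕ, F.c 1 ∈ F.f^[k] '' Set.Icc a₂ b₂ ∧
      F.c 1 ∈ F.f^[k + 1] '' Set.Icc a₂ b₂) :
    ¬ ∃ k : ℕ, F.c 1 ∈ F.f^[k] '' (Set.Icc a₁ b₁ ∪ Set.Icc a₂ b₂) ∧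
      F.c 1 ∈ F.f^[k + 1] '' (Set.Icc a₁ b₁ ∪ Set.Icc a₂ b₂) := by
  intro hfast
  obtain ⟨t, ht₁, ht₂⟩ := hmeet
  rw [Set.Icc_union_Icc' (ht₂.1.trans ht₁.2) (ht₁.1.trans ht₂.2)] at hfast
  have hpos := (hchar _ _ (le_min h₁ h₂)
    ((min_le_of_left_le ht₁.1).trans (le_max_of_le_left ht₁.2)) (max_le h₁'' h₂'')).mp hfast
  have hbound (n : ℕ) :
      eVariationOn F.f^[n] (Icc (min a₁ a₂) (max b₁ b₂)) ≤ 2 * 2 ^ ((n + 1) / 2) :=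
    eVariationOn_Icc_min_max_le ht₁ ht₂
      (IsSlow.eVariationOn_iterate_le n hslow₁ ordConnected_Icc (Icc_subset_Icc h₁ h₁'')).1
      (IsSlow.eVariationOn_iterate_le n hslow₂ ordConnected_Icc (Icc_subset_Icc h₂ h₂'')).1
  rw [(tendsto_toReal_div_pow_of_le_two_pow_half hlam ENNReal.ofNat_ne_top hbound).liminf_eq]
    at hpos
  exact hpos.false

/-- if `J₁`, `J₂` are slow intervals for a unimodal map with nonempty
intersection, then `J₁ ∪ J₂` is slow.  (Here `λ = e^{h_top(f)} > √2`, and the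
characterization "fast ⟺ liminf Var_J(fⁿ)/λⁿ > 0" holds.) -/
theorem stmt_15 (F : PwMono 2) (lam : ℝ) (hlam : Real.sqrt 2 < lam)
    -- the characterization of fast intervals via the growth of variation
    (hchar : ∀ a b : ℝ, 0 ≤ a → a ≤ b → b ≤ 1 →
      ((∃ k : ℕ, F.c 1 ∈ F.f^[k] '' Set.Icc a b ∧ F.c 1 ∈ F.f^[k + 1] '' Set.Icc a b) ↔
        0 < atTop.liminf fun n : ℕ => (eVariationOn (F.f^[n]) (Set.Icc a b)).toReal / lam ^ n))
    (a₁ b₁ a₂ b₂ : ℝ) (h₁ : 0 ≤ a₁) (h₁' : a₁ ≤ b₁) (h₁'' : b₁ ≤ 1)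
    (h₂ : 0 ≤ a₂) (h₂' : a₂ ≤ b₂) (h₂'' : b₂ ≤ 1)
    (hmeet : (Set.Icc a₁ b₁ ∩ Set.Icc a₂ b₂).Nonempty)
    (hslow₁ : ¬ ∃ k : ℕ, F.c 1 ∈ F.f^[k] '' Set.Icc a₁ b₁ ∧
      F.c 1 ∈ F.f^[k + 1] '' Set.Icc a₁ b₁)
    (hslow₂ : ¬ ∃ k : ℕ, F.c 1 ∈ F.f^[k] '' Set.Icc a₂ b₂ ∧
      F.c 1 ∈ F.f^[k + 1] '' Set.Icc a₂ b₂) :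
    ¬ ∃ k : ℕ, F.c 1 ∈ F.f^[k] '' (Set.Icc a₁ b₁ ∪ Set.Icc a₂ b₂) ∧
      F.c 1 ∈ F.f^[k + 1] '' (Set.Icc a₁ b₁ ∪ Set.Icc a₂ b₂) :=
  stmt_15_general F lam hlam hchar a₁ b₁ a₂ b₂ h₁ h₁'' h₂ h₂'' hmeet hslow₁ hslow₂
end
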